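/- arXiv:2512.16118 — 4 statements merged into one kernel-verified Lean document; each statement's English description precedes it below -/
import Mathlib

section
/- Let γ ∈ K_∞ \ F_q[t]. Then there exist α, β ∈ K_∞ such that the additive polynomial A(x) = α·x + β·x^p satisfies: (a) τ(A) = γ, and (b) for every h ∈ F_q[t] \ {0, 1}, τ(h·A) ∉ F_q[t]. -/
open Polynomial

noncomputable section

/-- The field `K_∞ = F_q((1/t))`, modelled as Laurent series in `X = 1/t`. -/
abbrev Kinf (Fq : Type) [Field Fq] := LaurentSeries Fq

/-- The embedding of the polynomial ring `F_q[t]` into `K_∞`, sending `t` to `X⁻¹`,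
i.e. to the Laurent series with a single coefficient `1` in degree `-1`. -/
def polyToK (Fq : Type) [Field Fq] : Polynomial Fq →+* Kinf Fq :=
  Polynomial.eval₂RingHom (HahnSeries.C : Fq →+* Kinf Fq) (HahnSeries.single (-1 : ℤ) 1)

/-- `α ∈ K_∞` is irrational if it is not a ratio `g/h` with `g, h ∈ F_q[t]`, `h ≠ 0`. -/
def IrrationalK (Fq : Type) [Field Fq] (α : Kinf Fq) : Prop :=
  ¬ ∃ g h : Polynomial Fq, h ≠ 0 ∧ α = polyToK Fq g / polyToK Fq h

/-- Equidistribution in `𝕋`, in the cylinder-set form of Carlitz's definition: for every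
`M ≥ 1` and every tuple `(c_1, …, c_M)` of elements of `F_q`, the proportion of `u` with
`ord u < N` whose value `s u` has coefficient `c_i` at `t^{-i}` for `1 ≤ i ≤ M`
(the coefficient of `t^{-i}` being the `HahnSeries` coefficient at `i`) tends to `q^{-M}`. -/
def Equidistributed (Fq : Type) [Field Fq] [Fintype Fq]
    (s : Polynomial Fq → Kinf Fq) : Prop :=
  ∀ M : ℕ, 1 ≤ M → ∀ c : Fin M → Fq,
    Filter.Tendsto
      (fun N : ℕ =>
        (Nat.card {u : Polynomial Fq //
            u.degree < (N : ℕ) ∧ ∀ i : Fin M, (s u).coeff ((i : ℤ) + 1) = c i} : ℝ)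
          / (Fintype.card Fq : ℝ) ^ N)
      Filter.atTop (nhds (((Fintype.card Fq : ℝ) ^ M)⁻¹))

/-- The finset of polynomials `u ∈ F_q[t]` with `ord u = deg u < N`. -/
def polysDegLT (Fq : Type) [Field Fq] [Fintype Fq] (N : ℕ) : Finset (Polynomial Fq) :=
  letI := Classical.decEq (Polynomial Fq)
  Finset.image
    (fun c : Fin N → Fq => ∑ i : Fin N, Polynomial.C (c i) * Polynomial.X ^ (i : ℕ))
    Finset.univ

/-- The trace map `tr : F_q → F_p`. -/
def trFq (p : ℕ) (Fq : Type) [Field Fq] [CharP Fq p] (a : Fq) : ZMod p :=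
  letI := ZMod.algebra Fq p
  Algebra.trace (ZMod p) Fq a

/-- The additive character `e : K_∞ → ℂ`, `e(α) = exp(2πi·tr(res α)/p)`, where
`res α` is the coefficient of `t^{-1}` in `α`. -/
def eChar (p : ℕ) (Fq : Type) [Field Fq] [CharP Fq p] (α : Kinf Fq) : ℂ :=
  Complex.exp (2 * Real.pi * Complex.I * ((trFq p Fq (α.coeff 1)).val : ℂ) / p)

/-- The map `ψ_l : K_∞ → K_∞`, `ψ_l(Σ_i a_i t^i) = Σ_j a_{pj+l}^{1/p} t^j`, where
`b ↦ b^{1/p} = b^{p^{m-1}}` inverts the Frobenius on `F_q` (`q = p^m`).  In terms of the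
`HahnSeries` (i.e. `X = 1/t`) coefficients, the coefficient of `ψ_l α` at `n` is
`(α.coeff (p*n - l))^(p^(m-1))`. -/
def psiL (p m : ℕ) [Fact p.Prime] (Fq : Type) [Field Fq] (l : ℤ) (α : Kinf Fq) : Kinf Fq where
  coeff := fun n => (α.coeff ((p : ℤ) * n - l)) ^ (p ^ (m - 1))
  isPWO_support' := by
    have hp : (0 : ℤ) < (p : ℤ) := by exact_mod_cast (Fact.out : p.Prime).pos
    have hsub : (Function.support fun n : ℤ =>
        (α.coeff ((p : ℤ) * n - l)) ^ (p ^ (m - 1))) ⊆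
        (fun i : ℤ => (i + l) / (p : ℤ)) '' α.support := by
      intro n hn
      have hne : α.coeff ((p : ℤ) * n - l) ≠ 0 := by
        intro h0
        apply hn
        simp only [Function.mem_support, ne_eq, not_not]
        rw [h0]
        exact zero_pow (pow_ne_zero _ (Fact.out : p.Prime).ne_zero)
      refine ⟨(p : ℤ) * n - l, hne, ?_⟩
      show ((p : ℤ) * n - l + l) / (p : ℤ) = n
      rw [sub_add_cancel, Int.mul_ediv_cancel_left _ (ne_of_gt hp)]
    exact ((α.isPWO_support).image_of_monotone
      (fun a b hab => Int.ediv_le_ediv hp (by omega))).mono hsub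

/-- The map `ψ = ψ_{p-1}` satisfying `e(α ξ^p) = e(ψ(α) ξ)`. -/
def psiK (p m : ℕ) [Fact p.Prime] (Fq : Type) [Field Fq] (α : Kinf Fq) : Kinf Fq :=
  psiL p m Fq ((p : ℤ) - 1) α

/-- A polynomial `A ∈ K_∞[x]` is additive if `A(x+y) = A(x) + A(y)` in `K_∞[x,y]`
(modelled as `K_∞[x][y]`, with `x = C X` and `y = X`). -/
def IsAdditive (Fq : Type) [Field Fq] (A : Polynomial (Kinf Fq)) : Prop :=
  A.eval₂ ((Polynomial.C).comp (Polynomial.C)) (Polynomial.C Polynomial.X + Polynomial.X) =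
    A.eval₂ ((Polynomial.C).comp (Polynomial.C)) (Polynomial.C Polynomial.X) +
      A.eval₂ ((Polynomial.C).comp (Polynomial.C)) (Polynomial.X :
        Polynomial (Polynomial (Kinf Fq)))

/-- The map `τ`: for an additive polynomial `A(x) = Σ_ν α_ν x^{p^ν}` one has
`τ(A) = Σ_ν ψ^ν(α_ν)`. -/
def tauK (p m : ℕ) [Fact p.Prime] (Fq : Type) [Field Fq] (A : Polynomial (Kinf Fq)) :
    Kinf Fq :=
  ∑ ν ∈ Finset.range (A.natDegree + 1), (psiK p m Fq)^[ν] (A.coeff (p ^ ν))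

end


noncomputable section St14Aux

variable (p m : ℕ) [Fact p.Prime] (Fq : Type) [Field Fq]

lemma psiK_coeff (α : Kinf Fq) (n : ℤ) :
    (psiK p m Fq α).coeff n = (α.coeff ((p : ℤ) * n - ((p : ℤ) - 1))) ^ (p ^ (m - 1)) := rfl

lemma psiK_zero : psiK p m Fq 0 = 0 := by
  ext n
  show ((0 : Kinf Fq).coeff _) ^ (p ^ (m - 1)) = (0 : Kinf Fq).coeff n
  simp [zero_pow (pow_ne_zero _ (Fact.out : p.Prime).ne_zero)]

lemma tauK_linear (a b : Kinf Fq) :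
    tauK p m Fq (Polynomial.C a * Polynomial.X + Polynomial.C b * Polynomial.X ^ p) =
      a + psiK p m Fq b := by
  have hp2 : 2 ≤ p := (Fact.out : p.Prime).two_le
  set A : Polynomial (Kinf Fq) := Polynomial.C a * Polynomial.X + Polynomial.C b * Polynomial.X ^ p with hA
  have hc : ∀ k : ℕ, A.coeff k =
      (if k = 1 then a else 0) + (if k = p then b else 0) := by
    intro k
    simp [hA, Polynomial.coeff_add, Polynomial.coeff_C_mul, Polynomial.coeff_X,
      Polynomial.coeff_X_pow, eq_comm]
  have hdeg : A.natDegree ≤ p := by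
    refine le_trans (Polynomial.natDegree_add_le _ _) (max_le ?_ ?_)
    · exact le_trans (Polynomial.natDegree_C_mul_le _ _) (by simp; omega)
    · exact le_trans (Polynomial.natDegree_C_mul_le _ _) (by simp)
  have hzero : ∀ ν : ℕ, 2 ≤ ν → (psiK p m Fq)^[ν] (A.coeff (p ^ ν)) = 0 := by
    intro ν hν
    have h1 : p ^ ν ≠ 1 := by
      have : p ^ 1 < p ^ ν := Nat.pow_lt_pow_right (by omega) (by omega)
      simp at this; omega
    have h2 : p ^ ν ≠ p := by
      have : p ^ 1 < p ^ ν := Nat.pow_lt_pow_right (by omega) (by omega)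
      simp at this; omega
    rw [hc, if_neg h1, if_neg h2, add_zero, Function.iterate_fixed (psiK_zero p m Fq) ν]
  have hext : tauK p m Fq A = ∑ ν ∈ Finset.range (p + 1),
      (psiK p m Fq)^[ν] (A.coeff (p ^ ν)) := by
    refine Finset.sum_subset (Finset.range_subset_range.2 (by omega)) ?_
    intro ν _ hν
    simp only [Finset.mem_range, not_lt] at hν
    have hlt : A.natDegree < p ^ ν := by
      have h1 : ν < 2 ^ ν := Nat.lt_two_pow_self
      have h2 : 2 ^ ν ≤ p ^ ν := Nat.pow_le_pow_left hp2 ν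
      omega
    rw [Polynomial.coeff_eq_zero_of_natDegree_lt hlt,
      Function.iterate_fixed (psiK_zero p m Fq) ν]
  rw [hext]
  have hsmall : ∑ ν ∈ Finset.range (p + 1), (psiK p m Fq)^[ν] (A.coeff (p ^ ν)) =
      ∑ ν ∈ Finset.range 2, (psiK p m Fq)^[ν] (A.coeff (p ^ ν)) := by
    refine (Finset.sum_subset (Finset.range_subset_range.2 (by omega)) ?_).symm
    intro ν _ hν
    simp only [Finset.mem_range, not_lt] at hν
    exact hzero ν hν
  rw [hsmall, Finset.sum_range_succ, Finset.sum_range_one]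
  simp only [Function.iterate_zero, id_eq, Function.iterate_one, pow_zero, pow_one]
  rw [hc 1, hc p, if_pos rfl, if_neg (by omega), if_neg (by omega), if_pos rfl,
    add_zero, zero_add]

lemma polyToK_eq_sum (h : Polynomial Fq) :
    polyToK Fq h = ∑ k ∈ Finset.range (h.natDegree + 1),
      HahnSeries.single (-(k : ℤ)) (h.coeff k) := by
  conv_lhs => rw [h.as_sum_range]
  rw [map_sum]
  refine Finset.sum_congr rfl fun k _ => ?_
  rw [← Polynomial.C_mul_X_pow_eq_monomial, map_mul, map_pow]
  have h1 : polyToK Fq (Polynomial.C (h.coeff k)) = HahnSeries.C (h.coeff k) :=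
    Polynomial.eval₂_C _ _
  have h2 : polyToK Fq Polynomial.X = HahnSeries.single (-1 : ℤ) 1 :=
    Polynomial.eval₂_X _ _
  rw [h1, h2, HahnSeries.single_pow]
  rw [show (HahnSeries.C (h.coeff k) : Kinf Fq) = HahnSeries.single (0 : ℤ) (h.coeff k) from rfl,
    HahnSeries.single_mul_single]
  congr 1
  · simp
  · simp

lemma coeff_sum {ι : Type} (s : Finset ι) (f : ι → Kinf Fq) (n : ℤ) :
    (∑ k ∈ s, f k).coeff n = ∑ k ∈ s, (f k).coeff n :=
  map_sum (HahnSeries.coeff.addMonoidHom n) f s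

lemma polyToK_coeff_pos (g : Polynomial Fq) {n : ℤ} (hn : 0 < n) :
    (polyToK Fq g).coeff n = 0 := by
  rw [polyToK_eq_sum, coeff_sum]
  refine Finset.sum_eq_zero fun k _ => ?_
  rw [HahnSeries.coeff_single, if_neg (by omega)]

lemma not_mem_range_polyToK {x : Kinf Fq} {n : ℤ} (hn : 0 < n) (hx : x.coeff n ≠ 0) :
    x ∉ Set.range (polyToK Fq) := by
  rintro ⟨g, rfl⟩
  exact hx (polyToK_coeff_pos Fq g hn)

lemma polyToK_mul_coeff (h : Polynomial Fq) (x : Kinf Fq) (n : ℤ) :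
    (polyToK Fq h * x).coeff n =
      ∑ k ∈ Finset.range (h.natDegree + 1), h.coeff k * x.coeff (n + k) := by
  rw [polyToK_eq_sum, Finset.sum_mul, coeff_sum]
  refine Finset.sum_congr rfl fun k _ => ?_
  have := HahnSeries.coeff_single_mul_add (r := h.coeff k) (x := x) (a := n + (k : ℤ))
    (b := -(k : ℤ))
  rw [show n + (k : ℤ) + -(k : ℤ) = n by ring] at this
  exact this

lemma hahn_C_mul_coeff (c : Fq) (x : Kinf Fq) (n : ℤ) :
    ((HahnSeries.C c : Kinf Fq) * x).coeff n = c * x.coeff n := by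
  have := HahnSeries.coeff_single_mul_add (r := c) (x := x) (a := n) (b := (0 : ℤ))
  rw [add_zero] at this
  exact this

lemma psiK_C_mul (c : Fq) (hc : c ^ (p ^ (m - 1)) = c) (x : Kinf Fq) :
    psiK p m Fq (HahnSeries.C c * x) = HahnSeries.C c * psiK p m Fq x := by
  ext n
  rw [hahn_C_mul_coeff, psiK_coeff, psiK_coeff, hahn_C_mul_coeff, mul_pow, hc]

end St14Aux

lemma pow_p_pow_eq (Fq : Type) [Field Fq] (p : ℕ) (c : Fq) (hc : c ^ p = c) :
    ∀ k : ℕ, c ^ (p ^ k) = c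
  | 0 => by simp
  | (k+1) => by rw [pow_succ, pow_mul, pow_p_pow_eq Fq p c hc k, hc]


/-- Theorem 5.3.  For every `γ ∈ K_∞ \ F_q[t]` there are `α, β ∈ K_∞`
such that `A(x) = α x + β x^p` satisfies `τ(A) = γ` and `τ(h A) ∉ F_q[t]` for all
`h ∈ F_q[t] \ {0, 1}`. -/
theorem statement14 (p m : ℕ) [Fact p.Prime] (hm : m ≠ 0)
    (Fq : Type) [Field Fq] [Fintype Fq] (hq : Fintype.card Fq = p ^ m)
    (γ : Kinf Fq) (hγ : γ ∉ Set.range (polyToK Fq)) :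
    ∃ α β : Kinf Fq,
      tauK p m Fq (Polynomial.C α * Polynomial.X + Polynomial.C β * Polynomial.X ^ p) = γ ∧
      ∀ h : Polynomial Fq, h ≠ 0 → h ≠ 1 →
        tauK p m Fq (Polynomial.C (polyToK Fq h) *
            (Polynomial.C α * Polynomial.X + Polynomial.C β * Polynomial.X ^ p)) ∉
          Set.range (polyToK Fq) := by
  classical
  have hp2 : 2 ≤ p := (Fact.out : p.Prime).two_le
  have hpne : (p : ℤ) ≠ 0 := by exact_mod_cast (by omega : p ≠ 0)
  have hrne : p ^ (m - 1) ≠ 0 := pow_ne_zero _ (by omega)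
  -- Frobenius facts
  have hcard : ∀ x : Fq, x ^ (p ^ m) = x := fun x => by rw [← hq]; exact FiniteField.pow_card x
  have hmm : p * p ^ (m - 1) = p ^ m := by
    rw [← pow_succ']; congr 1; omega
  have hrp : ∀ x : Fq, (x ^ p) ^ (p ^ (m - 1)) = x := fun x => by
    rw [← pow_mul, hmm]; exact hcard x
  have hrev : ∀ c : Fq, c ^ (p ^ (m - 1)) = c → c ^ p = c := by
    intro c hcr
    calc c ^ p = (c ^ (p ^ (m - 1))) ^ p := by rw [hcr]
      _ = c ^ (p ^ (m - 1) * p) := by rw [pow_mul]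
      _ = c ^ (p ^ m) := by rw [← pow_succ, Nat.sub_add_cancel (by omega : 1 ≤ m)]
      _ = c := hcard c
  -- enumeration
  have hcount : Countable (Polynomial Fq) :=
    (Polynomial.toFinsuppIso Fq).toEquiv.countable_iff.mpr
      (Function.Injective.countable (f := AddMonoidAlgebra.coeff) (fun a b h => by cases a; cases b; cases h; rfl))
  obtain ⟨ι, hι⟩ := Countable.exists_injective_nat (Polynomial Fq)
  set D : ℕ → ℕ := fun j => if hj : ∃ h : Polynomial Fq, ι h = j then hj.choose.natDegree else 0
    with hDdef
  have hD : ∀ h : Polynomial Fq, D (ι h) = h.natDegree := by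
    intro h
    have hex : ∃ h' : Polynomial Fq, ι h' = ι h := ⟨h, rfl⟩
    simp only [hDdef, dif_pos hex]
    rw [hι hex.choose_spec]
  set F : ℕ → ℕ := fun j => j + 1 + ∑ i ∈ Finset.range (j + 1), D i with hFdef
  set N : Polynomial Fq → ℕ := fun h => F (ι h) with hNdef
  have hN1 : ∀ h : Polynomial Fq, h.natDegree + 1 ≤ N h := by
    intro h
    have h1 : D (ι h) ≤ ∑ i ∈ Finset.range (ι h + 1), D i :=
      Finset.single_le_sum (fun i _ => Nat.zero_le _) (Finset.self_mem_range_succ _)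
    have h2 := hD h
    simp only [hNdef, hFdef]
    omega
  have hFlt : ∀ j j' : ℕ, j < j' → F j + D j' < F j' := by
    intro j j' hjj
    have hdis : Disjoint (Finset.range (j + 1)) ({j'} : Finset ℕ) := by
      simp [Finset.disjoint_singleton_right]; omega
    have hsub : Finset.range (j + 1) ∪ {j'} ⊆ Finset.range (j' + 1) := by
      intro x hx; simp only [Finset.mem_union, Finset.mem_range, Finset.mem_singleton] at hx
      simp only [Finset.mem_range]; omega
    have h1 : ∑ i ∈ Finset.range (j + 1), D i + D j' ≤ ∑ i ∈ Finset.range (j' + 1), D i := by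
      have h2 := Finset.sum_le_sum_of_subset (f := D) hsub
      rwa [Finset.sum_union hdis, Finset.sum_singleton] at h2
    simp only [hFdef]; omega
  have hsep : ∀ h h' : Polynomial Fq, h ≠ h' → (N h' + h.natDegree < N h ∨ N h < N h') := by
    intro h h' hne
    rcases lt_trichotomy (ι h') (ι h) with hlt | heq | hgt
    · left
      have h1 := hFlt (ι h') (ι h) hlt
      have h2 := hD h
      simp only [hNdef]; omega
    · exact absurd (hι heq).symm hne
    · right
      have h1 := hFlt (ι h) (ι h') hgt
      simp only [hNdef]; omega
  have hNinj : Function.Injective N := by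
    intro h h' hEq
    by_contra hne
    rcases hsep h h' hne with h1 | h1 <;> omega
  set e : Polynomial Fq → ℤ := fun h => (p : ℤ) * (N h : ℤ) - ((p : ℤ) - 1) with hedef
  have he1 : ∀ h, 1 ≤ e h := by
    intro h
    have h1 : (1 : ℤ) ≤ (N h : ℤ) := by exact_mod_cast (by have := hN1 h; omega : 1 ≤ N h)
    have h2 : (2 : ℤ) ≤ (p : ℤ) := by exact_mod_cast hp2
    simp only [hedef]
    nlinarith
  have heinj : Function.Injective e := by
    intro h h' hEq
    apply hNinj
    simp only [hedef] at hEq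
    have h3 : (p : ℤ) * (N h : ℤ) = (p : ℤ) * (N h' : ℤ) := by omega
    exact_mod_cast mul_left_cancel₀ hpne h3
  -- the data
  set w : Polynomial Fq → Fq :=
    fun h => (polyToK Fq h * γ).coeff ((N h : ℤ) - (h.natDegree : ℤ)) with hwdef
  set B : Polynomial Fq → Fq := fun h => if w h = 0 then 1 else 0 with hBdef
  set bco : Polynomial Fq → Fq := fun h => (B h) ^ p with hbcodef
  set bfun : ℤ → Fq :=
    fun k => if hk : ∃ h : Polynomial Fq, e h = k then bco hk.choose else 0 with hbfundef
  have hbfun0 : ∀ k : ℤ, (∀ h : Polynomial Fq, e h ≠ k) → bfun k = 0 := by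
    intro k hk
    simp only [hbfundef]
    rw [dif_neg]
    rintro ⟨h, hh⟩
    exact hk h hh
  have hbfune : ∀ h : Polynomial Fq, bfun (e h) = bco h := by
    intro h
    have hex : ∃ h' : Polynomial Fq, e h' = e h := ⟨h, rfl⟩
    simp only [hbfundef, dif_pos hex]
    rw [heinj hex.choose_spec]
  set β : Kinf Fq := ⟨bfun, by
    have hbdd : BddBelow (Function.support bfun) := by
      refine ⟨1, fun k hk => ?_⟩
      simp only [Function.mem_support] at hk
      by_cases hex : ∃ h : Polynomial Fq, e h = k
      · obtain ⟨h, hh⟩ := hex; rw [← hh]; exact he1 h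
      · exact absurd (hbfun0 k (by push_neg at hex; exact hex)) hk
    exact Set.IsWF.isPWO hbdd.wellFoundedOn_lt⟩ with hβdef
  have hβco : ∀ k : ℤ, β.coeff k = bfun k := fun k => rfl
  -- psi beta coefficients
  have hψat : ∀ h : Polynomial Fq, (psiK p m Fq β).coeff ((N h : ℤ)) = B h := by
    intro h
    rw [psiK_coeff]
    have harg : (p : ℤ) * (N h : ℤ) - ((p : ℤ) - 1) = e h := by simp only [hedef]
    rw [harg, hβco, hbfune]
    simp only [hbcodef]
    exact hrp (B h)
  have hψnot : ∀ n : ℤ, (∀ h : Polynomial Fq, (N h : ℤ) ≠ n) →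
      (psiK p m Fq β).coeff n = 0 := by
    intro n hn
    rw [psiK_coeff, hβco]
    rw [hbfun0]
    · exact zero_pow hrne
    · intro h hh
      simp only [hedef] at hh
      have h3 : (p : ℤ) * (N h : ℤ) = (p : ℤ) * n := by omega
      exact hn h (mul_left_cancel₀ hpne h3)
  set α : Kinf Fq := γ - psiK p m Fq β with hαdef
  have hαβ : α + psiK p m Fq β = γ := by rw [hαdef, sub_add_cancel]
  refine ⟨α, β, ?_, ?_⟩
  · rw [tauK_linear, hαβ]
  · intro h h0 h1
    set d : ℕ := h.natDegree with hddef
    set hK : Kinf Fq := polyToK Fq h with hKdef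
    have hfact : Polynomial.C hK *
        (Polynomial.C α * Polynomial.X + Polynomial.C β * Polynomial.X ^ p) =
        Polynomial.C (hK * α) * Polynomial.X + Polynomial.C (hK * β) * Polynomial.X ^ p := by
      rw [mul_add, ← mul_assoc, ← mul_assoc, ← Polynomial.C_mul, ← Polynomial.C_mul]
    rw [hfact, tauK_linear]
    by_cases hcase : h.natDegree = 0 ∧ (h.coeff 0) ^ p = h.coeff 0
    · -- scalar case: h = C c with c in the prime field
      obtain ⟨hd0, hcp⟩ := hcase
      set c : Fq := h.coeff 0 with hcdef
      have hhC : h = Polynomial.C c := Polynomial.eq_C_of_natDegree_eq_zero hd0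
      have hc0 : c ≠ 0 := fun hc => h0 (by rw [hhC, hc, map_zero])
      have hKC : hK = HahnSeries.C c := by
        rw [hKdef, hhC]; exact Polynomial.eval₂_C _ _
      have hcr : c ^ (p ^ (m - 1)) = c := pow_p_pow_eq Fq p c hcp (m - 1)
      rw [hKC, psiK_C_mul p m Fq c hcr, ← mul_add, hαβ]
      rintro ⟨g, hg⟩
      apply hγ
      refine ⟨Polynomial.C c⁻¹ * g, ?_⟩
      rw [map_mul, hg, ← mul_assoc,
        show polyToK Fq (Polynomial.C c⁻¹) = HahnSeries.C c⁻¹ from Polynomial.eval₂_C _ _,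
        ← map_mul (HahnSeries.C (R := Fq)), inv_mul_cancel₀ hc0, map_one, one_mul]
    · -- generic case
      push_neg at hcase
      set n₀ : ℤ := (N h : ℤ) - (d : ℤ) with hn₀def
      have hdN : d + 1 ≤ N h := hN1 h
      have hpos : 0 < n₀ := by simp only [hn₀def]; omega
      apply not_mem_range_polyToK Fq hpos
      rw [HahnSeries.coeff_add]
      -- first term
      have hterm1 : (hK * α).coeff n₀ = w h - h.coeff d * B h := by
        have hsplit : hK * α = hK * γ - hK * psiK p m Fq β := by rw [hαdef, mul_sub]
        rw [hsplit, HahnSeries.coeff_sub]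
        have hw1 : (hK * γ).coeff n₀ = w h := by simp only [hKdef, hwdef, hn₀def, hddef]
        have hw2 : (hK * psiK p m Fq β).coeff n₀ = h.coeff d * B h := by
          rw [hKdef, polyToK_mul_coeff]
          rw [Finset.sum_eq_single_of_mem d (Finset.self_mem_range_succ _)]
          · rw [show n₀ + (d : ℤ) = (N h : ℤ) by simp only [hn₀def]; ring, hψat h]
          · intro k hk hkd
            have hklt : k < d := by
              simp only [Finset.mem_range, hddef] at hk ⊢; omega
            rw [hψnot (n₀ + (k : ℤ)), mul_zero]
            intro h' hh'
            have hne : h ≠ h' := by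
              intro hEq
              rw [← hEq] at hh'
              simp only [hn₀def] at hh'
              omega
            rcases hsep h h' hne with hs | hs
            · -- N h' + d < N h, but N h' = N h - d + k
              have : (N h' : ℤ) + (d : ℤ) < (N h : ℤ) := by exact_mod_cast hs
              simp only [hn₀def] at hh'; omega
            · have : (N h : ℤ) < (N h' : ℤ) := by exact_mod_cast hs
              simp only [hn₀def] at hh'; omega
        rw [hw1, hw2]
      -- second term
      by_cases hd0 : d = 0
      · -- degree zero, c not fixed by frobenius
        set c : Fq := h.coeff 0 with hcdef
        have hcpne : c ^ p ≠ c := hcase (by rw [← hddef]; exact hd0)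
        have hcrne : c ^ (p ^ (m - 1)) ≠ c := fun hcr => hcpne (hrev c hcr)
        have hterm2 : (psiK p m Fq (hK * β)).coeff n₀ = c ^ (p ^ (m - 1)) * B h := by
          rw [psiK_coeff, hKdef, polyToK_mul_coeff, ← hddef, hd0]
          rw [Finset.sum_range_one]
          have harg : (p : ℤ) * n₀ - ((p : ℤ) - 1) + ((0 : ℕ) : ℤ) = e h := by
            simp only [hn₀def, hd0, hedef]; push_cast; ring
          rw [harg, hβco, hbfune]
          simp only [hbcodef, hcdef]
          rw [mul_pow, hrp (B h)]
        rw [hterm1, hterm2]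
        by_cases hw : w h = 0
        · have hB : B h = 1 := by simp only [hBdef, if_pos hw]
          rw [hw, hB, mul_one, mul_one, hd0, ← hcdef, zero_sub]
          intro hcontra
          exact hcrne (by linear_combination hcontra)
        · have hB : B h = 0 := by simp only [hBdef, if_neg hw]
          rw [hB, mul_zero, mul_zero, sub_zero, add_zero]
          exact hw
      · -- degree at least one
        have hd1 : 1 ≤ d := by omega
        have hp2' : (2 : ℤ) ≤ (p : ℤ) := by exact_mod_cast hp2
        have hterm2 : (psiK p m Fq (hK * β)).coeff n₀ = 0 := by
          rw [psiK_coeff, hKdef, polyToK_mul_coeff]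
          have hz : ∀ k ∈ Finset.range (h.natDegree + 1),
              h.coeff k * β.coeff ((p : ℤ) * n₀ - ((p : ℤ) - 1) + (k : ℤ)) = 0 := by
            intro k hk
            have hkle : k ≤ d := by
              rw [hddef]; simp only [Finset.mem_range] at hk; omega
            rw [hβco, hbfun0, mul_zero]
            intro h' hh'
            simp only [hedef, hn₀def] at hh'
            have hk0 : (0 : ℤ) ≤ (k : ℤ) := Int.natCast_nonneg k
            have hkle' : (k : ℤ) ≤ (d : ℤ) := by exact_mod_cast hkle
            have hd1' : (1 : ℤ) ≤ (d : ℤ) := by exact_mod_cast hd1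
            set s : ℤ := (N h' : ℤ) - (N h : ℤ) + (d : ℤ) with hsdef
            have hks : (k : ℤ) = (p : ℤ) * s := by
              simp only [hsdef]; linear_combination - hh'
            have hs0 : (0 : ℤ) ≤ s := by nlinarith [hks, hk0, hp2']
            have hsd : s < (d : ℤ) := by nlinarith [hks, hkle', hd1', hp2', hs0]
            have hne : h ≠ h' := by
              intro hEq
              rw [← hEq] at hsdef
              simp only [hsdef] at hsd
              omega
            rcases hsep h h' hne with hhs | hhs
            · have hcast : (N h' : ℤ) + (h.natDegree : ℤ) < (N h : ℤ) := by exact_mod_cast hhs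
              rw [← hddef] at hcast
              omega
            · have hcast : (N h : ℤ) < (N h' : ℤ) := by exact_mod_cast hhs
              omega
          rw [Finset.sum_eq_zero hz, zero_pow hrne]
        rw [hterm1, hterm2, add_zero]
        have hcd : h.coeff d ≠ 0 := by
          rw [hddef]
          exact Polynomial.leadingCoeff_ne_zero.mpr h0
        by_cases hw : w h = 0
        · have hB : B h = 1 := by simp only [hBdef, if_pos hw]
          rw [hw, hB, mul_one, zero_sub]
          exact neg_ne_zero.mpr hcd
        · have hB : B h = 0 := by simp only [hBdef, if_neg hw]
          rw [hB, mul_zero, sub_zero]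
          exact hw
end

section
/- There exists an additive polynomial A ∈ K_∞[x] such that the family (A(u))_{u ∈ F_q[t]} is equidistributed in 𝕋, yet the family (A(u^{q+1}) − u²/t)_{u ∈ F_q[t]} is not equidistributed in 𝕋. -/
open Polynomial

set_option linter.unusedSectionVars false
set_option linter.unusedVariables false
set_option maxHeartbeats 1000000

noncomputable section


/-- The periodic antisymmetric sign pattern. -/
def fZ (q n : ℕ) : ℤ :=
  if (n % (q^2-1)) % q < (n % (q^2-1)) / q then 1
  else if (n % (q^2-1)) / q < (n % (q^2-1)) % q then -1 else 0

/-- Sparse base. -/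
def RR (q : ℕ) : ℕ := 8 * q * (q ^ 2 - 1)

/-- Selector positions. -/
def bsel (q k : ℕ) : Prop := ∃ s : ℕ, 1 ≤ s ∧ k = q * RR q ^ s + s % q

lemma fZ_period (q n c : ℕ) : fZ q (n + (q^2-1) * c) = fZ q n := by
  unfold fZ
  rw [Nat.add_mul_mod_self_left]

lemma q2_ge {q : ℕ} (hq : 2 ≤ q) : 4 ≤ q^2 := by nlinarith

lemma sub1_mul (x a : ℕ) (h : 1 ≤ x) : (x - 1) * a + a = x * a := by
  have h1 : x - 1 + 1 = x := by omega
  calc (x-1)*a + a = ((x-1)+1)*a := by ring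
  _ = x*a := by rw [h1]

lemma fac_q {q : ℕ} (hq : 2 ≤ q) : q * (q-1) + (q-1) = q^2 - 1 := by
  obtain ⟨r, rfl⟩ : ∃ r, q = r + 1 := ⟨q-1, by omega⟩
  have h1 : r + 1 - 1 = r := by omega
  have h2 : (r+1)^2 = r*r + 2*r + 1 := by ring
  have h3 : (r+1)*r = r*r + r := by ring
  rw [h1]
  omega

lemma fZ_antisym {q : ℕ} (hq : 2 ≤ q) (a b : ℕ) : fZ q (q*a + b) + fZ q (q*b + a) = 0 := by
  have hq4 := q2_ge hq
  have hD0 : 0 < q^2 - 1 := by omega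
  have hfq := fac_q hq
  have hsD : (q*a + b) % (q^2-1) < q^2 - 1 := Nat.mod_lt _ hD0
  have hdig := Nat.div_add_mod ((q*a + b) % (q^2-1)) q
  have hs₀q : ((q*a + b) % (q^2-1)) % q < q := Nat.mod_lt _ (by omega)
  have hs₁q : ((q*a + b) % (q^2-1)) / q < q := by
    apply Nat.div_lt_of_lt_mul
    have : q * q = q ^ 2 := by ring
    omega
  have hnot : ¬ (((q*a + b) % (q^2-1)) % q = q - 1 ∧ ((q*a + b) % (q^2-1)) / q = q - 1) := by
    rintro ⟨h0, h1⟩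
    rw [h0, h1] at hdig
    omega
  have ht : (q*b + a) % (q^2-1)
      = q * (((q*a + b) % (q^2-1)) % q) + ((q*a + b) % (q^2-1)) / q := by
    have h1 : (q*b + a) % (q^2-1) = (q * (q*a+b)) % (q^2-1) := by
      have hc : (q^2-1) * a + a = q^2 * a := by
        have h' : q^2 - 1 + 1 = q^2 := by omega
        calc (q^2-1)*a + a = ((q^2-1)+1)*a := by ring
        _ = q^2*a := by rw [h']
      have hr : q * (q*a+b) = q^2 * a + q * b := by ring
      have he : q * (q*a+b) = (q*b + a) + (q^2-1) * a := by omega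
      rw [he, Nat.add_mul_mod_self_left]
    have h2 : (q * (q*a+b)) % (q^2-1) = (q * ((q*a+b) % (q^2-1))) % (q^2-1) := by
      rw [Nat.mul_mod q (q*a+b) (q^2-1), Nat.mul_mod q ((q*a+b) % (q^2-1)) (q^2-1),
        Nat.mod_mod_of_dvd _ dvd_rfl]
    have h3 : q * ((q*a+b) % (q^2-1))
        = (q * (((q*a + b) % (q^2-1)) % q) + ((q*a + b) % (q^2-1)) / q) + (q^2-1) * (((q*a + b) % (q^2-1)) / q) := by
      have hc : (q^2-1) * (((q*a + b) % (q^2-1)) / q) + (((q*a + b) % (q^2-1)) / q)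
          = q^2 * (((q*a + b) % (q^2-1)) / q) := by
        have h' : q^2 - 1 + 1 = q^2 := by omega
        calc (q^2-1)*(((q*a + b) % (q^2-1)) / q) + (((q*a + b) % (q^2-1)) / q)
            = ((q^2-1)+1)*(((q*a + b) % (q^2-1)) / q) := by ring
        _ = _ := by rw [h']
      have hexp : q * (q * (((q*a+b) % (q^2-1)) / q) + ((q*a+b) % (q^2-1)) % q)
          = q^2 * (((q*a+b) % (q^2-1)) / q) + q * (((q*a+b) % (q^2-1)) % q) := by ring
      have hh : q * ((q*a+b) % (q^2-1)) = q * (q * (((q*a+b) % (q^2-1)) / q) + ((q*a+b) % (q^2-1)) % q) := by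
        rw [hdig]
      omega
    have h4 : q * (((q*a + b) % (q^2-1)) % q) + ((q*a + b) % (q^2-1)) / q < q^2 - 1 := by
      rcases Nat.lt_or_ge (((q*a + b) % (q^2-1)) % q) (q-1) with h | h
      · have hle : q * (((q*a + b) % (q^2-1)) % q) + q ≤ q * (q - 1) := by
          have : (((q*a + b) % (q^2-1)) % q) + 1 ≤ q - 1 := by omega
          calc q * (((q*a + b) % (q^2-1)) % q) + q = q * ((((q*a + b) % (q^2-1)) % q) + 1) := by ring
          _ ≤ q * (q-1) := Nat.mul_le_mul_left _ this
        omega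
      · have h0 : ((q*a + b) % (q^2-1)) % q = q - 1 := by omega
        have h1' : ((q*a + b) % (q^2-1)) / q < q - 1 := by
          rcases Nat.lt_or_ge (((q*a + b) % (q^2-1)) / q) (q-1) with h' | h'
          · exact h'
          · exact absurd ⟨h0, by omega⟩ hnot
        have he : q * (((q*a + b) % (q^2-1)) % q) = q * (q-1) := by rw [h0]
        omega
    rw [h1, h2, h3, Nat.add_mul_mod_self_left, Nat.mod_eq_of_lt h4]
  -- digits of t
  have ht₀ : ((q*b + a) % (q^2-1)) % q = ((q*a + b) % (q^2-1)) / q := by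
    rw [ht, Nat.mul_add_mod, Nat.mod_eq_of_lt hs₁q]
  have ht₁ : ((q*b + a) % (q^2-1)) / q = ((q*a + b) % (q^2-1)) % q := by
    rw [ht, Nat.mul_add_div (by omega : 0 < q), Nat.div_eq_of_lt hs₁q, Nat.add_zero]
  unfold fZ
  rw [ht₀, ht₁]
  rcases lt_trichotomy (((q*a + b) % (q^2-1)) % q) (((q*a + b) % (q^2-1)) / q) with h|h|h
  · rw [if_pos h, if_neg (by omega), if_pos h]; ring
  · rw [if_neg (by omega), if_neg (by omega), if_neg (by omega), if_neg (by omega)]; ring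
  · rw [if_neg (by omega), if_pos h, if_pos h]; ring

lemma fZ_diag {q : ℕ} (hq : 2 ≤ q) (a : ℕ) : fZ q ((q+1) * a) = 0 := by
  have hq4 := q2_ge hq
  have hfq := fac_q hq
  have hfac : (q+1) * (q-1) = q^2 - 1 := by
    have : (q+1) * (q-1) = q * (q-1) + (q-1) := by ring
    omega
  have hmod : ((q+1) * a) % (q^2-1) = (q+1) * (a % (q-1)) := by
    rw [← hfac, Nat.mul_mod_mul_left]
  have hu : a % (q-1) < q - 1 := Nat.mod_lt _ (by omega)
  unfold fZ
  rw [hmod]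
  have he : (q+1) * (a % (q-1)) = q * (a % (q-1)) + (a % (q-1)) := by ring
  have h0 : ((q+1) * (a % (q-1))) % q = a % (q-1) := by
    rw [he, Nat.mul_add_mod, Nat.mod_eq_of_lt (by omega)]
  have h1 : ((q+1) * (a % (q-1))) / q = a % (q-1) := by
    rw [he, Nat.mul_add_div (by omega : 0 < q), Nat.div_eq_of_lt (by omega), Nat.add_zero]
  rw [h0, h1]
  simp

lemma fZ_one {q : ℕ} (hq : 2 ≤ q) : fZ q 1 = -1 := by
  have hq4 := q2_ge hq
  have h1 : (1 : ℕ) % (q^2-1) = 1 := Nat.mod_eq_of_lt (by omega)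
  unfold fZ
  rw [h1, Nat.mod_eq_of_lt (by omega), Nat.div_eq_of_lt (by omega)]
  norm_num

-- basic facts about RR
lemma RR_ge_48 {q : ℕ} (hq : 2 ≤ q) : 48 ≤ RR q := by
  unfold RR
  have hq4 := q2_ge hq
  calc (48:ℕ) = 8 * 2 * 3 := by norm_num
  _ ≤ 8 * q * (q^2-1) := by
      apply Nat.mul_le_mul
      · omega
      · omega

lemma RR_ge_q3 {q : ℕ} (hq : 2 ≤ q) : 4 * q^3 ≤ RR q := by
  unfold RR
  have hq4 := q2_ge hq
  have h : q^2 ≤ 2 * (q^2 - 1) := by omega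
  calc 4 * q^3 = (4 * q) * q^2 := by ring
  _ ≤ (4 * q) * (2 * (q^2-1)) := Nat.mul_le_mul_left _ h
  _ = 8 * q * (q^2-1) := by ring

lemma bsel_self {q : ℕ} (s : ℕ) (hs : 1 ≤ s) : bsel q (q * RR q ^ s + s % q) := ⟨s, hs, rfl⟩

/-- Window lemma: near level `s` only the selector itself is in `bsel`. -/
lemma bsel_window {q : ℕ} (hq : 2 ≤ q) (s : ℕ) (a : ℕ)
    (hlo : q * RR q ^ (s-1) + q ≤ a) (hhi : a + q ≤ q * RR q ^ (s+1))
    (hne : a ≠ q * RR q ^ s + s % q) : ¬ bsel q a := by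
  rintro ⟨t, ht1, rfl⟩
  have hR : 2 ≤ RR q := le_trans (by norm_num) (RR_ge_48 hq)
  have htq : t % q < q := Nat.mod_lt _ (by omega)
  rcases lt_trichotomy t s with h|h|h
  · have hpow : RR q ^ t ≤ RR q ^ (s-1) := Nat.pow_le_pow_right (by omega) (by omega)
    have : q * RR q ^ t ≤ q * RR q ^ (s-1) := Nat.mul_le_mul_left _ hpow
    omega
  · subst h; omega
  · have hpow : RR q ^ (s+1) ≤ RR q ^ t := Nat.pow_le_pow_right (by omega) (by omega)
    have : q * RR q ^ (s+1) ≤ q * RR q ^ t := Nat.mul_le_mul_left _ hpow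
    omega

section Defs
variable (Fq : Type) [Field Fq] [Fintype Fq]

open Classical in
def bselF (q k : ℕ) : Fq := if bsel q k then 1 else 0

def fF (q n : ℕ) : Fq := ((fZ q n : ℤ) : Fq)

def bFun (q k : ℕ) : Fq :=
  (if k % q = 2 % q ∧ 2 ≤ k then fF Fq q ((k-2)/q) else 0) + bselF Fq q k

def gFun (q k : ℕ) : Fq :=
  if k % q^2 = 2 % q^2 ∧ 2 ≤ k then -(bselF Fq q (2 + q * ((k-2)/q^2))) else 0

def bSer (q : ℕ) : Kinf Fq := (HahnSeries.ofPowerSeries ℤ Fq) (PowerSeries.mk (bFun Fq q))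
def gSer (q : ℕ) : Kinf Fq := (HahnSeries.ofPowerSeries ℤ Fq) (PowerSeries.mk (gFun Fq q))

def AA (q : ℕ) : Polynomial (Kinf Fq) :=
  Polynomial.C (bSer Fq q) * Polynomial.X ^ q + Polynomial.C (gSer Fq q) * Polynomial.X ^ (q^2)

def phiF (i : ℤ) (u : Polynomial Fq) : Fq :=
  ((AA Fq (Fintype.card Fq)).eval (polyToK Fq u)).coeff i

lemma bSer_coeff (q k : ℕ) : (bSer Fq q).coeff (k : ℤ) = bFun Fq q k := by
  rw [bSer, HahnSeries.ofPowerSeries_apply_coeff, PowerSeries.coeff_mk]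

lemma gSer_coeff (q k : ℕ) : (gSer Fq q).coeff (k : ℤ) = gFun Fq q k := by
  rw [gSer, HahnSeries.ofPowerSeries_apply_coeff, PowerSeries.coeff_mk]

lemma AA_eval (q : ℕ) (v : Kinf Fq) :
    (AA Fq q).eval v = bSer Fq q * v ^ q + gSer Fq q * v ^ (q^2) := by
  simp [AA]

lemma polyToK_monomial (n : ℕ) (a : Fq) :
    polyToK Fq (Polynomial.monomial n a) = HahnSeries.single (-(n:ℤ)) a := by
  unfold polyToK
  rw [coe_eval₂RingHom, eval₂_monomial, HahnSeries.single_pow, HahnSeries.C_apply,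
    HahnSeries.single_mul_single]
  simp

lemma single_pow_q (n r : ℕ) (a : Fq) :
    (HahnSeries.single (-(n:ℤ)) a : Kinf Fq) ^ (Fintype.card Fq ^ r)
      = HahnSeries.single (-((Fintype.card Fq ^ r * n : ℕ) : ℤ)) a := by
  rw [HahnSeries.single_pow, FiniteField.pow_card_pow]
  congr 1
  push_cast
  rw [nsmul_eq_mul]
  push_cast
  ring

lemma eval_AA_monomial (i n : ℕ) (a : Fq) :
    phiF Fq (i : ℤ) (Polynomial.monomial n a)
      = a * (bFun Fq (Fintype.card Fq) (i + Fintype.card Fq * n)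
           + gFun Fq (Fintype.card Fq) (i + (Fintype.card Fq)^2 * n)) := by
  set q := Fintype.card Fq with hqdef
  rw [phiF, polyToK_monomial, AA_eval, HahnSeries.coeff_add]
  have h1 : (HahnSeries.single (-(n:ℤ)) a : Kinf Fq) ^ q
      = HahnSeries.single (-((q * n : ℕ) : ℤ)) a := by
    have := single_pow_q Fq n 1 a
    simpa using this
  have h2 : (HahnSeries.single (-(n:ℤ)) a : Kinf Fq) ^ (q^2)
      = HahnSeries.single (-((q^2 * n : ℕ) : ℤ)) a := single_pow_q Fq n 2 a
  rw [h1, h2]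
  have hb : (bSer Fq q * HahnSeries.single (-((q * n : ℕ) : ℤ)) a).coeff (i : ℤ)
      = bFun Fq q (i + q * n) * a := by
    have h := HahnSeries.coeff_mul_single_add (x := bSer Fq q) (r := a)
      (a := ((i + q * n : ℕ) : ℤ)) (b := (-((q * n : ℕ) : ℤ)))
    rw [show ((i + q * n : ℕ) : ℤ) + (-((q * n : ℕ) : ℤ)) = (i : ℤ) by push_cast; ring] at h
    rw [h, bSer_coeff]
  have hg : (gSer Fq q * HahnSeries.single (-((q^2 * n : ℕ) : ℤ)) a).coeff (i : ℤ)
      = gFun Fq q (i + q^2 * n) * a := by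
    have h := HahnSeries.coeff_mul_single_add (x := gSer Fq q) (r := a)
      (a := ((i + q^2 * n : ℕ) : ℤ)) (b := (-((q^2 * n : ℕ) : ℤ)))
    rw [show ((i + q^2 * n : ℕ) : ℤ) + (-((q^2 * n : ℕ) : ℤ)) = (i : ℤ) by push_cast; ring] at h
    rw [h, gSer_coeff]
  rw [hb, hg]
  ring

lemma phi_Xpow (i j : ℕ) : phiF Fq (i:ℤ) ((X:Polynomial Fq)^j)
    = bFun Fq (Fintype.card Fq) (i + Fintype.card Fq * j)
    + gFun Fq (Fintype.card Fq) (i + (Fintype.card Fq)^2 * j) := by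
  rw [X_pow_eq_monomial, eval_AA_monomial, one_mul]

end Defs

section CharStuff
variable (Fq : Type) [Field Fq] [Fintype Fq]

lemma charP_Fq (p m : ℕ) (hp : p.Prime) (hq : Fintype.card Fq = p ^ m) : CharP Fq p := by
  have h0 : ((p^m : ℕ) : Fq) = 0 := by rw [← hq]; exact FiniteField.cast_card_eq_zero Fq
  have hdvd : ringChar Fq ∣ p ^ m := (CharP.cast_eq_zero_iff Fq (ringChar Fq) (p^m)).mp h0
  have hrc : (ringChar Fq).Prime := CharP.char_is_prime Fq (ringChar Fq)
  have : ringChar Fq = p :=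
    (Nat.prime_dvd_prime_iff_eq hrc hp).mp (hrc.dvd_of_dvd_pow hdvd)
  exact this ▸ ringChar.charP Fq

lemma charP_Kinf (p : ℕ) [CharP Fq p] : CharP (Kinf Fq) p := by
  constructor
  intro x
  rw [show ((x:ℕ) : Kinf Fq) = HahnSeries.C (x : Fq) from (map_natCast HahnSeries.C x).symm,
    map_eq_zero_iff _ HahnSeries.C_injective, CharP.cast_eq_zero_iff Fq p x]

variable (p m : ℕ) [Fact p.Prime] (hq : Fintype.card Fq = p ^ m)

include hq in
lemma phiF_add (i : ℤ) (u v : Polynomial Fq) :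
    phiF Fq i (u + v) = phiF Fq i u + phiF Fq i v := by
  haveI : CharP Fq p := charP_Fq Fq p m Fact.out hq
  haveI : CharP (Kinf Fq) p := charP_Kinf Fq p
  unfold phiF
  rw [map_add, AA_eval, AA_eval, AA_eval]
  set x := polyToK Fq u
  set y := polyToK Fq v
  have h1 : (x + y) ^ Fintype.card Fq = x ^ Fintype.card Fq + y ^ Fintype.card Fq := by
    rw [hq]; exact add_pow_char_pow x y p m
  have h2 : (x + y) ^ (Fintype.card Fq ^ 2) = x ^ (Fintype.card Fq ^ 2) + y ^ (Fintype.card Fq ^ 2) := by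
    rw [hq, ← pow_mul]; exact add_pow_char_pow x y p (m*2)
  rw [h1, h2, HahnSeries.coeff_add.symm]
  congr 1
  ring

def PHI (i : ℤ) : Polynomial Fq →+ Fq := AddMonoidHom.mk' (phiF Fq i) (phiF_add Fq p m hq i)

lemma PHI_apply (i : ℤ) (u : Polynomial Fq) : PHI Fq p m hq i u = phiF Fq i u := rfl

include hq in
lemma pow_card_expand (u : Polynomial Fq) :
    u ^ (Fintype.card Fq) = u.sum fun n a => Polynomial.monomial (Fintype.card Fq * n) a := by
  haveI : CharP Fq p := charP_Fq Fq p m Fact.out hq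
  induction u using Polynomial.induction_on' with
  | add u v hu hv =>
    rw [Polynomial.sum_add_index _ _ _ (fun i => Polynomial.monomial_zero_right _)
      (fun a b₁ b₂ => (Polynomial.monomial _).map_add b₁ b₂), ← hu, ← hv, hq,
      add_pow_char_pow]
  | monomial n a =>
    rw [Polynomial.sum_monomial_index _ _ (Polynomial.monomial_zero_right _),
      Polynomial.monomial_pow, mul_comm n, FiniteField.pow_card]

include hq in
lemma phiF_sub (i : ℤ) (u v : Polynomial Fq) :
    phiF Fq i (u - v) = phiF Fq i u - phiF Fq i v := by
  rw [← PHI_apply Fq p m hq, map_sub, PHI_apply, PHI_apply]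

include hq in
lemma phiF_neg (i : ℤ) (u : Polynomial Fq) : phiF Fq i (-u) = -phiF Fq i u := by
  rw [← PHI_apply Fq p m hq, map_neg, PHI_apply]

lemma polyToK_C (a : Fq) : polyToK Fq (Polynomial.C a) = HahnSeries.C a := by
  unfold polyToK
  rw [coe_eval₂RingHom, eval₂_C]

lemma phiF_smul (i : ℤ) (a : Fq) (u : Polynomial Fq) :
    phiF Fq i (a • u) = a * phiF Fq i u := by
  unfold phiF
  rw [Polynomial.smul_eq_C_mul, map_mul, polyToK_C, AA_eval, AA_eval]
  have hCq : (HahnSeries.C a : Kinf Fq) ^ (Fintype.card Fq) = HahnSeries.C a := by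
    rw [← map_pow, FiniteField.pow_card]
  have hCq2 : (HahnSeries.C a : Kinf Fq) ^ (Fintype.card Fq ^ 2) = HahnSeries.C a := by
    rw [← map_pow, FiniteField.pow_card_pow]
  have hmain : bSer Fq (Fintype.card Fq) * (HahnSeries.C a * polyToK Fq u) ^ Fintype.card Fq
      + gSer Fq (Fintype.card Fq) * (HahnSeries.C a * polyToK Fq u) ^ (Fintype.card Fq ^ 2)
      = HahnSeries.C a * (bSer Fq (Fintype.card Fq) * polyToK Fq u ^ Fintype.card Fq
        + gSer Fq (Fintype.card Fq) * polyToK Fq u ^ (Fintype.card Fq ^ 2)) := by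
    rw [mul_pow, mul_pow, hCq, hCq2]
    ring
  rw [hmain, HahnSeries.C_apply, HahnSeries.single_zero_mul_eq_smul, HahnSeries.coeff_smul]
  rfl

end CharStuff

section PartC
variable (Fq : Type) [Field Fq] [Fintype Fq] (p m : ℕ) [Fact p.Prime]
  (hq : Fintype.card Fq = p ^ m)

lemma comp_lemma (q : ℕ) (hq2 : 2 ≤ q) (n : ℕ) :
    bFun Fq q (2 + q*n) + gFun Fq q (2 + q^2*n) = fF Fq q n := by
  have hb : bFun Fq q (2 + q*n) = fF Fq q n + bselF Fq q (2 + q*n) := by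
    unfold bFun
    rw [if_pos ⟨Nat.add_mul_mod_self_left 2 q n, by omega⟩,
      Nat.add_sub_cancel_left, Nat.mul_div_cancel_left n (by omega : 0 < q)]
  have hg : gFun Fq q (2 + q^2*n) = -(bselF Fq q (2 + q*n)) := by
    unfold gFun
    rw [if_pos ⟨Nat.add_mul_mod_self_left 2 (q^2) n, by omega⟩,
      Nat.add_sub_cancel_left, Nat.mul_div_cancel_left n (by positivity : 0 < q^2)]
  rw [hb, hg]
  ring

include hq in
lemma phi2_vanish (u : Polynomial Fq) :
    phiF Fq 2 (u ^ (Fintype.card Fq + 1)) = 0 := by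
  set q := Fintype.card Fq with hqdef
  have hq2 : 2 ≤ q := Fintype.one_lt_card
  have expand : ∀ (k : ℕ) (c : Fq), (Polynomial.monomial k c : Polynomial Fq) * u
      = ∑ b ∈ u.support, Polynomial.monomial (k+b) (c * u.coeff b) := by
    intro k c
    conv_lhs => rw [← Polynomial.sum_monomial_eq u, Polynomial.sum_def, Finset.mul_sum]
    exact Finset.sum_congr rfl fun b _ => Polynomial.monomial_mul_monomial _ _ _ _
  have step1 : u ^ (q + 1) = ∑ a ∈ u.support, Polynomial.monomial (q*a) (u.coeff a) * u := by
    rw [pow_succ, pow_card_expand Fq p m hq u, Polynomial.sum_def, Finset.sum_mul]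
  have step2 : phiF Fq 2 (u ^ (q+1))
      = ∑ a ∈ u.support, ∑ b ∈ u.support,
          phiF Fq 2 (Polynomial.monomial (q*a + b) (u.coeff a * u.coeff b)) := by
    rw [← PHI_apply Fq p m hq, step1, map_sum]
    refine Finset.sum_congr rfl fun a _ => ?_
    rw [expand, map_sum]
    refine Finset.sum_congr rfl fun b _ => ?_
    rw [PHI_apply]
  have step3 : ∀ a b : ℕ, phiF Fq 2 (Polynomial.monomial (q*a + b) (u.coeff a * u.coeff b))
      = (u.coeff a * u.coeff b) * fF Fq q (q*a + b) := by
    intro a b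
    have h := eval_AA_monomial Fq 2 (q*a+b) (u.coeff a * u.coeff b)
    rw [show ((2:ℕ):ℤ) = (2:ℤ) by norm_num] at h
    rw [h, comp_lemma Fq q hq2]
  rw [step2]
  have step4 : ∑ a ∈ u.support, ∑ b ∈ u.support,
      phiF Fq 2 (Polynomial.monomial (q*a + b) (u.coeff a * u.coeff b))
      = ∑ x ∈ u.support ×ˢ u.support, (u.coeff x.1 * u.coeff x.2) * fF Fq q (q*x.1 + x.2) := by
    calc ∑ a ∈ u.support, ∑ b ∈ u.support,
        phiF Fq 2 (Polynomial.monomial (q*a + b) (u.coeff a * u.coeff b))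
        = ∑ a ∈ u.support, ∑ b ∈ u.support, (u.coeff a * u.coeff b) * fF Fq q (q*a + b) :=
          Finset.sum_congr rfl fun a _ => Finset.sum_congr rfl fun b _ => step3 a b
    _ = _ := (Finset.sum_product' u.support u.support
          (fun a b => (u.coeff a * u.coeff b) * fF Fq q (q*a + b))).symm
  rw [step4]
  refine Finset.sum_involution (fun x _ => (x.2, x.1)) ?_ ?_ ?_ ?_
  · intro x hx
    have hf : fF Fq q (q*x.1 + x.2) + fF Fq q (q*x.2 + x.1) = 0 := by
      unfold fF
      rw [← Int.cast_add, fZ_antisym hq2, Int.cast_zero]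
    simp only
    linear_combination (u.coeff x.1 * u.coeff x.2) * hf
  · intro x hx hne heq
    apply hne
    have hxx : x.2 = x.1 := by
      have := congrArg Prod.fst heq
      simpa using this
    rw [hxx]
    have : fF Fq q (q*x.1 + x.1) = 0 := by
      unfold fF
      rw [show q*x.1 + x.1 = (q+1)*x.1 by ring, fZ_diag hq2, Int.cast_zero]
    rw [this, mul_zero]
  · intro x hx
    simp only [Finset.mem_product] at hx ⊢
    exact ⟨hx.2, hx.1⟩
  · intro x hx
    rfl

lemma polyToK_coeff_pos_s15 (v : Polynomial Fq) (k : ℤ) (hk : 0 < k) :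
    (polyToK Fq v).coeff k = 0 := by
  induction v using Polynomial.induction_on' with
  | add u v hu hv => rw [map_add, HahnSeries.coeff_add, hu, hv, add_zero]
  | monomial n a =>
    rw [polyToK_monomial, HahnSeries.coeff_single_of_ne]
    have : (0:ℤ) ≤ (n:ℤ) := Int.natCast_nonneg n
    omega

include hq in
lemma scoeff2 (u : Polynomial Fq) :
    ((AA Fq (Fintype.card Fq)).eval (polyToK Fq u ^ (Fintype.card Fq + 1))
      - polyToK Fq u ^ 2 * HahnSeries.single (1:ℤ) 1).coeff 2 = 0 := by
  rw [HahnSeries.coeff_sub]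
  have h1 : ((AA Fq (Fintype.card Fq)).eval (polyToK Fq u ^ (Fintype.card Fq + 1))).coeff 2
      = phiF Fq 2 (u ^ (Fintype.card Fq + 1)) := by
    rw [← map_pow]; rfl
  have h2 : (polyToK Fq u ^ 2 * HahnSeries.single (1:ℤ) 1).coeff 2 = 0 := by
    rw [← map_pow]
    have h := HahnSeries.coeff_mul_single_add (x := polyToK Fq (u^2)) (r := (1:Fq))
      (a := (1:ℤ)) (b := (1:ℤ))
    rw [show (1:ℤ) + 1 = 2 by norm_num] at h
    rw [h, polyToK_coeff_pos_s15 Fq _ 1 one_pos, zero_mul]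
  rw [h1, h2, phi2_vanish Fq p m hq, sub_zero]

end PartC

section Helpers
variable (Fq : Type) [Field Fq] [Fintype Fq]

lemma bselF_one {q a : ℕ} (h : bsel q a) : bselF Fq q a = 1 := by
  unfold bselF; rw [if_pos h]

lemma bselF_zero {q a : ℕ} (h : ¬ bsel q a) : bselF Fq q a = 0 := by
  unfold bselF; rw [if_neg h]

lemma fF_period (q n c : ℕ) : fF Fq q (n + (q^2-1) * c) = fF Fq q n := by
  unfold fF; rw [fZ_period]

end Helpers

lemma pow_bound1 {q : ℕ} (hq2 : 2 ≤ q) (s w : ℕ) (hs : 1 ≤ s) (hw : w ≤ s) :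
    q * RR q ^ (s-1) + q + w ≤ q * RR q ^ s := by
  have hR : 48 ≤ RR q := RR_ge_48 hq2
  have hEs : s - 1 < RR q ^ (s-1) := Nat.lt_pow_self (a := RR q) (by omega)
  have hE : s ≤ RR q ^ (s-1) := by omega
  have hps : RR q ^ s = RR q ^ (s-1) * RR q := by
    rw [← pow_succ]; congr 1; omega
  have h1 : q ≤ q * s := Nat.le_mul_of_pos_right q (by omega)
  have h2 : q * s ≤ q * RR q ^ (s-1) := Nat.mul_le_mul_left q hE
  have hsqs : s ≤ q * s := Nat.le_mul_of_pos_left s (by omega)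
  calc q * RR q ^ (s-1) + q + w
      ≤ q * RR q ^ (s-1) + q * s + q * s := by omega
  _ ≤ 48 * (q * RR q ^ (s-1)) := by omega
  _ = q * (RR q ^ (s-1) * 48) := by ring
  _ ≤ q * (RR q ^ (s-1) * RR q) := Nat.mul_le_mul_left _ (Nat.mul_le_mul_left _ hR)
  _ = q * RR q ^ s := by rw [hps]

lemma pow_bound2 {q : ℕ} (hq2 : 2 ≤ q) (s w : ℕ) (hs : 1 ≤ s) (hw : w ≤ s) :
    q^3 * RR q ^ s + w + q ≤ q * RR q ^ (s+1) := by
  have hR : 4 * q^3 ≤ RR q := RR_ge_q3 hq2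
  have hEs : s < RR q ^ s := Nat.lt_pow_self (a := RR q) (by have := RR_ge_48 hq2; omega)
  have hq3 : 2 ≤ q^3 := le_trans hq2 (Nat.le_self_pow (by omega) q)
  have hps : q * RR q ^ (s+1) = (q * RR q ^ s) * RR q := by rw [pow_succ]; ring
  have h1 : (q * RR q ^ s) * (4 * q^3) ≤ (q * RR q ^ s) * RR q :=
    Nat.mul_le_mul_left _ hR
  have h2 : (q * RR q ^ s) * (4 * q^3) = 4 * (q^3 * (q * RR q ^ s)) := by ring
  have h3 : q^3 * RR q ^ s ≤ q^3 * (q * RR q ^ s) := by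
    apply Nat.mul_le_mul_left
    exact Nat.le_mul_of_pos_left _ (by omega)
  have h4 : w ≤ q^3 * (q * RR q ^ s) := by
    have : w ≤ RR q ^ s := by omega
    calc w ≤ RR q ^ s := this
    _ ≤ q * RR q ^ s := Nat.le_mul_of_pos_left _ (by omega)
    _ ≤ q^3 * (q * RR q ^ s) := Nat.le_mul_of_pos_left _ (by omega)
  have h5 : q ≤ q^3 * (q * RR q ^ s) := by
    have h6 : q ≤ q * RR q ^ s := Nat.le_mul_of_pos_right q (pow_pos (by omega) s)
    calc q ≤ q * RR q ^ s := h6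
    _ ≤ q^3 * (q * RR q ^ s) := Nat.le_mul_of_pos_left _ (by omega)
  omega

lemma ge_two_of_mod {q i : ℕ} (hq2 : 2 ≤ q) (h1 : 1 ≤ i) (h : i % q = 2 % q) : 2 ≤ i := by
  rcases Nat.lt_or_ge i 2 with h2 | h2
  · have hi1 : i = 1 := by omega
    subst hi1
    have : (1:ℕ) % q = 1 := Nat.mod_eq_of_lt (by omega)
    rcases Nat.eq_or_lt_of_le hq2 with hq | hq
    · rw [← hq] at h; omega
    · have : (2:ℕ) % q = 2 := Nat.mod_eq_of_lt (by omega)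
      omega
  · exact h2

lemma one_mod_ne {q : ℕ} (hq2 : 2 ≤ q) : ¬ ((1:ℕ) % q = 2 % q) := by
  intro h
  exact absurd (ge_two_of_mod hq2 le_rfl h) (by omega)

section Witness
variable (Fq : Type) [Field Fq] [Fintype Fq] (p m : ℕ) [Fact p.Prime]
  (hq : Fintype.card Fq = p ^ m)

include hq in
lemma witness_ne2 (hq2 : 2 ≤ Fintype.card Fq) (k : ℕ) (hk1 : 1 ≤ k) (hk2 : k ≠ 2) :
    ∃ (u : Polynomial Fq) (d : ℕ), u.degree < (d : ℕ) ∧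
      ∀ i' : ℕ, 1 ≤ i' → i' ≤ k → phiF Fq (i':ℤ) u = (if i' = k then 1 else 0) := by
  set q := Fintype.card Fq with hqdef
  set s := k + q * (k + q + 9) with hsdef
  set E := RR q ^ s with hEdef
  set j := E - k / q with hjdef
  set Δ := (q^2 - 1) * E with hΔdef
  have hR48 : 48 ≤ RR q := RR_ge_48 hq2
  have hq4 : 4 ≤ q^2 := by
    calc (4:ℕ) = 2*2 := rfl
    _ ≤ q*q := Nat.mul_le_mul hq2 hq2
    _ = q^2 := (sq q).symm
  have hposq : 1 ≤ q * (k + q + 9) := Nat.mul_pos (by omega) (by omega)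
  have hs1 : 1 ≤ s := by omega
  have hsq : s % q = k % q := Nat.add_mul_mod_self_left k q _
  have hsk : k + q + 9 ≤ s := by
    have : k + q + 9 ≤ q * (k + q + 9) := Nat.le_mul_of_pos_left _ (by omega)
    omega
  have hsE : s < E := Nat.lt_pow_self (a := RR q) (by omega)
  have hkdm := Nat.div_add_mod k q
  have hkmq : k % q < q := Nat.mod_lt _ (by omega)
  have hjE : k / q ≤ E := by
    have := Nat.div_le_self k q; omega
  have hqjE : q * j = q * E - q * (k / q) := by
    rw [hjdef, Nat.mul_sub]
  have hkqE : k ≤ q * E := by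
    have h1 : E ≤ q * E := Nat.le_mul_of_pos_left _ (by omega)
    omega
  have hj : q * j + (k - k % q) = q * E := by omega
  have hkk : k / q ≤ k := Nat.div_le_self k q
  have hj1 : 1 ≤ j := by
    rw [hjdef]
    omega
  have hqE_eq : q * RR q ^ s = q * E := by rw [hEdef]
  have hb1 : q * RR q ^ (s-1) + q + (k + q + 5) ≤ q * E := by
    have := pow_bound1 hq2 s (k+q+5) hs1 (by omega)
    omega
  have hb2 : q^3 * E + (k + q + 5) + q ≤ q * RR q ^ (s+1) := pow_bound2 hq2 s (k+q+5) hs1 (by omega)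
  have hqd : q * Δ + q * E = q^3 * E := by
    have h' : q^2 - 1 + 1 = q^2 := by omega
    have hc : q * Δ = (q^2-1) * (q * E) := by rw [hΔdef]; ring
    have hc2 : (q^2-1) * (q * E) + q * E = ((q^2-1)+1) * (q*E) := by ring
    have hc3 : ((q^2-1)+1) * (q*E) = q^2 * (q * E) := by rw [h']
    have hc4 : q^2 * (q*E) = q^3 * E := by ring
    omega
  have hA3 : q * E ≤ q^3 * E := Nat.mul_le_mul_right E (Nat.le_self_pow (by omega) q)
  have h2A : 2 * (q * E) ≤ q^3 * E := by
    have h22 : 2 * q ≤ q^2 * q := Nat.mul_le_mul_right q (by omega)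
    have h23 : q^2 * q = q^3 := by ring
    have : 2 * q ≤ q^3 := by omega
    calc 2 * (q * E) = (2*q) * E := by ring
    _ ≤ q^3 * E := Nat.mul_le_mul_right E this
  -- the witness
  refine ⟨X^j - X^(j+Δ), j + Δ + 2, ?_, ?_⟩
  · have hd : (X^j - X^(j+Δ) : Polynomial Fq).degree ≤ ((j+Δ : ℕ) : WithBot ℕ) := by
      refine le_trans (Polynomial.degree_sub_le _ _) ?_
      rw [Polynomial.degree_X_pow, Polynomial.degree_X_pow]
      simp only [max_le_iff]
      constructor
      · exact_mod_cast Nat.le_add_right j Δ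
      · exact le_rfl
    refine lt_of_le_of_lt hd ?_
    exact_mod_cast Nat.lt_succ_of_lt (Nat.lt_succ_self _)
  intro i' hi'1 hi'k
  rw [phiF_sub Fq p m hq, phi_Xpow, phi_Xpow, ← hqdef]
  -- window evaluations
  have hP1pos : i' + q * j + (k - k % q) = q * E + i' := by omega
  have hP2pos : i' + q * (j + Δ) + (k - k % q) = q^3 * E + i' := by
    have : q * (j + Δ) = q * j + q * Δ := by ring
    omega
  -- bsel at leg1 position
  have hbsel1 : bselF Fq q (i' + q * j) = (if i' = k then (1:Fq) else 0) := by
    by_cases hik : i' = k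
    · subst hik
      rw [show i' + q * j = q * RR q ^ s + s % q by rw [hsq]; omega]
      rw [if_pos rfl]
      exact bselF_one Fq (bsel_self s hs1)
    · rw [if_neg hik]
      apply bselF_zero
      apply bsel_window hq2 s
      · omega
      · omega
      · rw [hsq]; omega
  -- bsel at leg2 position
  have hbsel2 : bselF Fq q (i' + q * (j + Δ)) = (0:Fq) := by
    apply bselF_zero
    apply bsel_window hq2 s
    · omega
    · omega
    · rw [hsq]; omega
  -- gFun legs
  have hgmod1 : (i' + q^2 * j) % q^2 = i' % q^2 := Nat.add_mul_mod_self_left i' (q^2) j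
  have hgmod2 : (i' + q^2 * (j+Δ)) % q^2 = i' % q^2 := Nat.add_mul_mod_self_left i' (q^2) (j+Δ)
  have hgFun : ∀ JJ : ℕ, 1 ≤ JJ → (2 + q * JJ ≠ q * RR q ^ s + s % q) →
      (q * JJ + (k - k%q) = q * E ∨ q * JJ + (k - k%q) = q^3 * E) →
      gFun Fq q (i' + q^2 * JJ) = 0 := by
    intro JJ hJJ hneJJ hJJpos
    unfold gFun
    by_cases hgc : i' % q^2 = 2 % q^2
    · rw [if_pos ⟨by rw [Nat.add_mul_mod_self_left]; exact hgc, by nlinarith⟩]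
      -- i' = 2 + q^2 * e''
      have h2q2 : (2:ℕ) % q^2 = 2 := Nat.mod_eq_of_lt (by omega)
      have hi'2 : i' % q^2 = 2 := by omega
      have hidm := Nat.div_add_mod i' (q^2)
      set e'' := i' / q^2 with he''def
      have hie : i' = q^2 * e'' + 2 := by omega
      have hexp : q^2 * (e'' + JJ) = q^2 * e'' + q^2 * JJ := by ring
      have hdiv : (i' + q^2 * JJ - 2) / q^2 = e'' + JJ := by
        rw [show i' + q^2 * JJ - 2 = q^2 * (e'' + JJ) by omega]
        exact Nat.mul_div_cancel_left _ (by omega)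
      rw [hdiv]
      rw [bselF_zero]
      · ring
      -- inner position: 2 + q*(e'' + JJ) = 2 + q*e'' + q*JJ
      have hqe : q * (e''+JJ) = q * e'' + q * JJ := by ring
      have hq2e : q^2 * e'' = q * (q * e'') := by ring
      have hq2e2 : 2 * (q * e'') ≤ q * (q * e'') := Nat.mul_le_mul_right _ hq2
      have hqee : q * e'' ≤ q^2 * e'' := by omega
      have hqek : q * e'' ≤ k := by
        have : q^2 * e'' ≤ i' := by omega
        omega
      apply bsel_window hq2 s
      · rcases hJJpos with h|h <;> omega
      · rcases hJJpos with h|h <;> omega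
      · -- 2 + q*e'' + q*JJ ≠ K
        rcases hJJpos with h|h
        · -- leg1-type: q*JJ = qE - (k - k%q): equal iff 2 + q*e'' = k
          intro hcon
          rw [hsq] at hcon
          have hek : 2 + q * e'' = k := by omega
          -- then i' = 2 + q*(q*e'') ≥ ... > k unless e'' = 0, i.e. k = 2
          have : q * e'' = 0 := by omega
          have : e'' = 0 := by
            rcases Nat.eq_zero_or_pos e'' with h0|h0
            · exact h0
            · exfalso
              have h2e : 2 * 1 ≤ q * e'' := Nat.mul_le_mul hq2 h0
              omega
          rw [this] at hek
          simp at hek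
          exact hk2 hek.symm
        · rw [hsq]; omega
    · rw [if_neg (by rw [Nat.add_mul_mod_self_left]; exact fun hc => hgc hc.1)]
  have hg1 : gFun Fq q (i' + q^2 * j) = 0 := by
    apply hgFun j hj1
    · rw [hsq]; omega
    · left; omega
  have hg2 : gFun Fq q (i' + q^2 * (j+Δ)) = 0 := by
    apply hgFun (j+Δ) (by omega)
    · rw [hsq]
      have : q * (j + Δ) = q * j + q * Δ := by ring
      omega
    · right
      have : q * (j + Δ) = q * j + q * Δ := by ring
      omega
  -- bFun legs
  have hfmod1 : (i' + q * j) % q = i' % q := Nat.add_mul_mod_self_left i' q j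
  have hfmod2 : (i' + q * (j+Δ)) % q = i' % q := Nat.add_mul_mod_self_left i' q (j+Δ)
  by_cases hfc : i' % q = 2 % q
  · -- f-parts present in both legs, equal by periodicity
    have hi'2 : 2 ≤ i' := ge_two_of_mod hq2 hi'1 hfc
    have hdvd : q ∣ i' - 2 := (Nat.modEq_iff_dvd' hi'2).mp (Nat.ModEq.symm hfc)
    obtain ⟨e, he⟩ := hdvd
    have hb1' : bFun Fq q (i' + q * j) = fF Fq q (e + j) + (if i' = k then 1 else 0) := by
      unfold bFun
      rw [if_pos ⟨by rw [hfmod1]; exact hfc, by omega⟩]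
      rw [show (i' + q * j - 2) / q = e + j by
        rw [show i' + q * j - 2 = q * (e + j) by rw [Nat.mul_add, ← he]; omega]
        exact Nat.mul_div_cancel_left _ (by omega)]
      rw [hbsel1]
    have hb2' : bFun Fq q (i' + q * (j+Δ)) = fF Fq q (e + j) := by
      unfold bFun
      rw [if_pos ⟨by rw [hfmod2]; exact hfc, by omega⟩]
      rw [show (i' + q * (j+Δ) - 2) / q = (e + j) + (q^2-1) * E by
        rw [show i' + q * (j+Δ) - 2 = q * ((e + j) + (q^2-1) * E) by
          have h1 : q * ((e + j) + (q^2-1) * E) = q*e + q*j + q*Δ := by rw [hΔdef]; ring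
          have h2 : q * (j+Δ) = q*j + q*Δ := by ring
          omega]
        exact Nat.mul_div_cancel_left _ (by omega)]
      rw [fF_period, hbsel2, add_zero]
    rw [hb1', hb2', hg1, hg2]
    ring
  · have hb1' : bFun Fq q (i' + q * j) = (if i' = k then 1 else 0) := by
      unfold bFun
      rw [if_neg (by rw [hfmod1]; exact fun hc => hfc hc.1), hbsel1, zero_add]
    have hb2' : bFun Fq q (i' + q * (j+Δ)) = 0 := by
      unfold bFun
      rw [if_neg (by rw [hfmod2]; exact fun hc => hfc hc.1), hbsel2, zero_add]
    rw [hb1', hb2', hg1, hg2]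
    ring

end Witness

section Witness2
variable (Fq : Type) [Field Fq] [Fintype Fq] (p m : ℕ) [Fact p.Prime]
  (hq : Fintype.card Fq = p ^ m)

include hq in
lemma witness_two (hq2 : 2 ≤ Fintype.card Fq) :
    ∃ (u : Polynomial Fq) (d : ℕ), u.degree < (d : ℕ) ∧
      phiF Fq ((2:ℕ):ℤ) u = 1 ∧ phiF Fq ((1:ℕ):ℤ) u = 0 := by
  set q := Fintype.card Fq with hqdef
  set s := 2 + q * (q + 11) with hsdef
  set E := RR q ^ s with hEdef
  set j₂ := (q^2 - 1) * E + 1 with hjdef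
  have hR48 : 48 ≤ RR q := RR_ge_48 hq2
  have hq4 : 4 ≤ q ^ 2 := by
    calc (4:ℕ) = 2*2 := rfl
    _ ≤ q*q := Nat.mul_le_mul hq2 hq2
    _ = q^2 := (sq q).symm
  have hposq : 1 ≤ q * (q + 11) := Nat.mul_pos (by omega) (by omega)
  have hsk : q + 11 ≤ s := by
    have : q + 11 ≤ q * (q + 11) := Nat.le_mul_of_pos_left _ (by omega)
    omega
  have hs1 : 1 ≤ s := by omega
  have hsE : s < E := Nat.lt_pow_self (a := RR q) (by omega)
  have hsmq : s % q < q := Nat.mod_lt _ (by omega)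
  have hqE_eq : q * RR q ^ s = q * E := by rw [hEdef]
  have hb1 : q * RR q ^ (s-1) + q + (q + 5) ≤ q * E := by
    have := pow_bound1 hq2 s (q+5) hs1 (by omega)
    omega
  have hb2 : q^3 * E + (q + 5) + q ≤ q * RR q ^ (s + 1) := pow_bound2 hq2 s (q+5) hs1 (by omega)
  have hq3E : q * ((q^2-1) * E) + q * E = q^3 * E := by
    have h' : q^2 - 1 + 1 = q^2 := by omega
    have hc : q * ((q^2-1) * E) = (q^2-1) * (q * E) := by ring
    have hc2 : (q^2-1) * (q * E) + q * E = ((q^2-1)+1) * (q*E) := by ring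
    have hc3 : ((q^2-1)+1) * (q*E) = q^2 * (q * E) := by rw [h']
    have hc4 : q^2 * (q*E) = q^3 * E := by ring
    omega
  have h3A : 3 * (q * E) ≤ q * ((q^2-1) * E) := by
    have hc : q * ((q^2-1) * E) = (q^2-1) * (q * E) := by ring
    have : 3 * (q*E) ≤ (q^2-1) * (q*E) := Nat.mul_le_mul_right _ (by omega)
    omega
  have hEqE : E ≤ q * E := Nat.le_mul_of_pos_left _ (by omega)
  have hqj2 : q * j₂ = q * ((q^2-1) * E) + q := by rw [hjdef]; ring
  have hwin : ∀ a : ℕ, q * ((q^2-1) * E) + 1 ≤ a → a ≤ q * ((q^2-1) * E) + 2*q + 2 →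
      bselF Fq q a = 0 := by
    intro a ha1 ha2
    apply bselF_zero
    apply bsel_window hq2 s
    · omega
    · omega
    · omega
  -- the two bFun values
  have hbF2 : bFun Fq q (2 + q * j₂) = -1 := by
    unfold bFun
    rw [if_pos ⟨by rw [Nat.add_mul_mod_self_left], by omega⟩]
    rw [show (2 + q * j₂ - 2) / q = j₂ by
      rw [Nat.add_sub_cancel_left]; exact Nat.mul_div_cancel_left _ (by omega)]
    rw [hwin (2 + q * j₂) (by omega) (by omega)]
    rw [show j₂ = 1 + (q^2-1) * E by omega, fF_period]
    unfold fF
    rw [fZ_one hq2]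
    simp
  have hbF1 : bFun Fq q (1 + q * j₂) = 0 := by
    unfold bFun
    rw [if_neg (by rw [Nat.add_mul_mod_self_left]; exact fun hc => one_mod_ne hq2 hc.1)]
    rw [hwin (1 + q * j₂) (by omega) (by omega), zero_add]
  -- the two gFun values
  have hgF2 : gFun Fq q (2 + q^2 * j₂) = 0 := by
    unfold gFun
    rw [if_pos ⟨by rw [Nat.add_mul_mod_self_left], by omega⟩]
    rw [show (2 + q^2 * j₂ - 2) / q^2 = j₂ by
      rw [Nat.add_sub_cancel_left]; exact Nat.mul_div_cancel_left _ (by omega)]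
    rw [hwin (2 + q * j₂) (by omega) (by omega)]
    simp
  have hgF1 : gFun Fq q (1 + q^2 * j₂) = 0 := by
    unfold gFun
    rw [if_neg ?_]
    rw [Nat.add_mul_mod_self_left]
    intro hc
    have h1 : (1:ℕ) % q^2 = 1 := Nat.mod_eq_of_lt (by omega)
    have h2 : (2:ℕ) % q^2 = 2 := Nat.mod_eq_of_lt (by omega)
    omega
  refine ⟨-(X^j₂), j₂ + 1, ?_, ?_, ?_⟩
  · rw [Polynomial.degree_neg, Polynomial.degree_X_pow]
    exact_mod_cast Nat.lt_succ_self j₂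
  · rw [phiF_neg Fq p m hq, phi_Xpow, ← hqdef, hbF2, hgF2]
    norm_num
  · rw [phiF_neg Fq p m hq, phi_Xpow, ← hqdef, hbF1, hgF1]
    norm_num

include hq in
lemma witness_all (hq2 : 2 ≤ Fintype.card Fq) (k : ℕ) (hk1 : 1 ≤ k) :
    ∃ (u : Polynomial Fq) (d : ℕ), u.degree < (d : ℕ) ∧
      phiF Fq (k:ℤ) u = 1 ∧ ∀ i' : ℕ, 1 ≤ i' → i' < k → phiF Fq (i':ℤ) u = 0 := by
  by_cases hk2 : k = 2
  · subst hk2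
    obtain ⟨u, d, hd, h2, h1⟩ := witness_two Fq p m hq hq2
    refine ⟨u, d, hd, by exact_mod_cast h2, ?_⟩
    intro i' hi'1 hi'k
    have : i' = 1 := by omega
    subst this
    exact_mod_cast h1
  · obtain ⟨u, d, hd, hval⟩ := witness_ne2 Fq p m hq hq2 k hk1 hk2
    refine ⟨u, d, hd, ?_, ?_⟩
    · have := hval k hk1 le_rfl
      rw [if_pos rfl] at this
      exact this
    · intro i' hi'1 hi'k
      have := hval i' hi'1 (le_of_lt hi'k)
      rw [if_neg (by omega)] at this
      exact this

end Witness2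

section Surj
variable (Fq : Type) [Field Fq] [Fintype Fq] (p m : ℕ) [Fact p.Prime]
  (hq : Fintype.card Fq = p ^ m)

include hq in
lemma surj_all (M : ℕ) :
    ∃ N₁ : ℕ, ∀ c : Fin M → Fq, ∃ u : Polynomial Fq,
      u.degree < (N₁ : ℕ) ∧ ∀ i : Fin M, phiF Fq ((i:ℤ)+1) u = c i := by
  have hq2 : 2 ≤ Fintype.card Fq := Fintype.one_lt_card
  induction M with
  | zero =>
    refine ⟨1, fun c => ⟨0, ?_, fun i => i.elim0⟩⟩
    rw [Polynomial.degree_zero]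
    exact WithBot.bot_lt_coe _
  | succ M ih =>
    obtain ⟨N₁, hN₁⟩ := ih
    obtain ⟨w, d, hwdeg, hwk, hwlow⟩ := witness_all Fq p m hq hq2 (M+1) (by omega)
    refine ⟨max N₁ d, fun c => ?_⟩
    obtain ⟨u₀, hu₀deg, hu₀⟩ := hN₁ (fun i => c i.castSucc)
    refine ⟨u₀ + (c (Fin.last M) - phiF Fq ((M:ℤ)+1) u₀) • w, ?_, ?_⟩
    · refine lt_of_le_of_lt (Polynomial.degree_add_le _ _) ?_
      rw [max_lt_iff]
      constructor
      · exact lt_of_lt_of_le hu₀deg (by exact_mod_cast le_max_left N₁ d)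
      · exact lt_of_le_of_lt (Polynomial.degree_smul_le _ _)
          (lt_of_lt_of_le hwdeg (by exact_mod_cast le_max_right N₁ d))
    · intro i
      have hadd : phiF Fq ((i:ℤ)+1) (u₀ + (c (Fin.last M) - phiF Fq ((M:ℤ)+1) u₀) • w)
          = phiF Fq ((i:ℤ)+1) u₀
            + (c (Fin.last M) - phiF Fq ((M:ℤ)+1) u₀) * phiF Fq ((i:ℤ)+1) w := by
        rw [phiF_add Fq p m hq, phiF_smul]
      rw [hadd]
      induction i using Fin.lastCases with
      | last =>
        have hcast : ((Fin.last M : Fin (M+1)) : ℤ) = (M:ℤ) := by simp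
        rw [hcast]
        have hw1 : phiF Fq ((M:ℤ)+1) w = 1 := by
          have h := hwk
          rw [show ((M+1 : ℕ):ℤ) = (M:ℤ)+1 by push_cast; ring] at h
          exact h
        rw [hw1, mul_one]
        ring
      | cast i =>
        have hcast : ((i.castSucc : Fin (M+1)) : ℤ) = (i:ℤ) := by simp
        rw [hcast]
        have hw0 : phiF Fq ((i:ℤ)+1) w = 0 := by
          have h := hwlow (i+1) (by omega) (by omega)
          rw [show ((i+1 : ℕ):ℤ) = (i:ℤ)+1 by push_cast; ring] at h
          exact h
        rw [hw0, mul_zero, add_zero]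
        exact hu₀ i

end Surj

lemma card_fiber {G H : Type} [AddCommGroup G] [AddCommGroup H] (φ : G →+ H)
    (hs : Function.Surjective φ) (c : H) :
    Nat.card {x : G // φ x = c} * Nat.card H = Nat.card G := by
  obtain ⟨x₀, hx₀⟩ := hs c
  have e : {x : G // φ x = c} ≃ φ.ker :=
    { toFun := fun x => ⟨x.1 - x₀, by
        rw [AddMonoidHom.mem_ker, map_sub, x.2, hx₀, sub_self]⟩
      invFun := fun y => ⟨y.1 + x₀, by
        have hy : φ y.1 = 0 := (AddMonoidHom.mem_ker).mp y.2
        rw [map_add, hy, hx₀, zero_add]⟩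
      left_inv := fun x => by ext; simp
      right_inv := fun y => by ext; simp }
  rw [Nat.card_congr e]
  have h2 := AddSubgroup.card_eq_card_quotient_mul_card_addSubgroup (φ.ker)
  rw [Nat.card_congr (QuotientAddGroup.quotientKerEquivOfSurjective φ hs).toEquiv] at h2
  rw [h2]
  ring

end

/-- counter-example to Hypothesis 5.1.  There is an additive polynomial
`A ∈ K_∞[x]` with `(A(u))_{u ∈ F_q[t]}` equidistributed in `𝕋`, while
`(A(u^{q+1}) - u²/t)_{u ∈ F_q[t]}` is not (here `1/t = X`). -/
theorem statement15 (p m : ℕ) [Fact p.Prime] (hm : m ≠ 0)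
    (Fq : Type) [Field Fq] [Fintype Fq] (hq : Fintype.card Fq = p ^ m) :
    ∃ A : Polynomial (Kinf Fq), IsAdditive Fq A ∧
      Equidistributed Fq (fun u => A.eval (polyToK Fq u)) ∧
      ¬ Equidistributed Fq (fun u =>
          A.eval (polyToK Fq u ^ (Fintype.card Fq + 1)) -
            polyToK Fq u ^ 2 * HahnSeries.single (1 : ℤ) 1) := by
  classical
  have hq2 : 2 ≤ Fintype.card Fq := Fintype.one_lt_card
  haveI hqc : CharP Fq p := charP_Fq Fq p m Fact.out hq
  haveI : CharP (Kinf Fq) p := charP_Kinf Fq p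
  refine ⟨AA Fq (Fintype.card Fq), ?_, ?_, ?_⟩
  · -- IsAdditive
    unfold IsAdditive
    haveI h1i : CharP (Polynomial (Kinf Fq)) p := inferInstance
    haveI h3i : CharP (Polynomial (Polynomial (Kinf Fq))) p := inferInstance
    have hrw : ∀ t : Polynomial (Polynomial (Kinf Fq)),
        (AA Fq (Fintype.card Fq)).eval₂ ((Polynomial.C).comp (Polynomial.C)) t
        = (Polynomial.C (Polynomial.C (bSer Fq (Fintype.card Fq)))) * t ^ (Fintype.card Fq)
        + (Polynomial.C (Polynomial.C (gSer Fq (Fintype.card Fq)))) * t ^ ((Fintype.card Fq)^2) := by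
      intro t
      rw [AA, Polynomial.C_mul_X_pow_eq_monomial, Polynomial.C_mul_X_pow_eq_monomial,
        Polynomial.eval₂_add, Polynomial.eval₂_monomial, Polynomial.eval₂_monomial,
        RingHom.comp_apply, RingHom.comp_apply]
    rw [hrw, hrw, hrw]
    have h1 : (Polynomial.C Polynomial.X + Polynomial.X :
          Polynomial (Polynomial (Kinf Fq))) ^ (Fintype.card Fq)
        = (Polynomial.C Polynomial.X : Polynomial (Polynomial (Kinf Fq)))^(Fintype.card Fq)
          + (Polynomial.X : Polynomial (Polynomial (Kinf Fq)))^(Fintype.card Fq) := by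
      rw [hq]
      exact add_pow_char_pow_of_commute (R := Polynomial (Polynomial (Kinf Fq))) _ _
        ((Polynomial.commute_X (Polynomial.C Polynomial.X :
          Polynomial (Polynomial (Kinf Fq)))).symm)
    have h2 : (Polynomial.C Polynomial.X + Polynomial.X :
          Polynomial (Polynomial (Kinf Fq))) ^ ((Fintype.card Fq)^2)
        = (Polynomial.C Polynomial.X : Polynomial (Polynomial (Kinf Fq)))^((Fintype.card Fq)^2)
          + (Polynomial.X : Polynomial (Polynomial (Kinf Fq)))^((Fintype.card Fq)^2) := by
      rw [hq, ← pow_mul]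
      exact add_pow_char_pow_of_commute (R := Polynomial (Polynomial (Kinf Fq))) _ _
        ((Polynomial.commute_X (Polynomial.C Polynomial.X :
          Polynomial (Polynomial (Kinf Fq)))).symm)
    rw [h1, h2, mul_add, mul_add]
    abel
  · -- Equidistributed
    intro M hM c
    obtain ⟨N₁, hN₁⟩ := surj_all Fq p m hq M
    apply Filter.Tendsto.congr' (f₁ := fun _ : ℕ => ((Fintype.card Fq : ℝ)^M)⁻¹)
      ?_ tendsto_const_nhds
    rw [Filter.EventuallyEq, Filter.eventually_atTop]
    refine ⟨N₁, fun N hN => ?_⟩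
    set V := Polynomial.degreeLT Fq N with hVdef
    have hPSIadd : ∀ x y : V, (fun i : Fin M => phiF Fq ((i:ℤ)+1) ((x + y : V) : Polynomial Fq))
        = (fun i : Fin M => phiF Fq ((i:ℤ)+1) (x : Polynomial Fq))
          + (fun i : Fin M => phiF Fq ((i:ℤ)+1) (y : Polynomial Fq)) := by
      intro x y
      funext i
      have hxy : ((x + y : V) : Polynomial Fq) = (x : Polynomial Fq) + (y : Polynomial Fq) := rfl
      rw [hxy, phiF_add Fq p m hq]
      rfl
    set PSI : V →+ (Fin M → Fq) :=
      AddMonoidHom.mk' (fun x => fun i => phiF Fq ((i:ℤ)+1) (x : Polynomial Fq)) hPSIadd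
      with hPSIdef
    have hsurj : Function.Surjective PSI := by
      intro c'
      obtain ⟨u, hudeg, hu⟩ := hN₁ c'
      refine ⟨⟨u, Polynomial.mem_degreeLT.mpr (lt_of_lt_of_le hudeg ?_)⟩, funext hu⟩
      exact_mod_cast hN
    have hfib := card_fiber PSI hsurj c
    have hVcard : Nat.card V = Fintype.card Fq ^ N := by
      rw [Nat.card_congr (Polynomial.degreeLTEquiv Fq N).toEquiv, Nat.card_pi]
      simp [Nat.card_eq_fintype_card]
    have hHcard : Nat.card (Fin M → Fq) = Fintype.card Fq ^ M := by
      rw [Nat.card_pi]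
      simp [Nat.card_eq_fintype_card]
    have hequiv : Nat.card {u : Polynomial Fq // u.degree < (N:ℕ) ∧
        ∀ i : Fin M, ((AA Fq (Fintype.card Fq)).eval (polyToK Fq u)).coeff ((i:ℤ)+1) = c i}
        = Nat.card {x : V // PSI x = c} := by
      apply Nat.card_congr
      refine ⟨fun u => ⟨⟨u.1, Polynomial.mem_degreeLT.mpr u.2.1⟩, funext fun i => u.2.2 i⟩,
        fun x => ⟨x.1.1, Polynomial.mem_degreeLT.mp x.1.2, fun i => congrFun x.2 i⟩, ?_, ?_⟩
      · intro u
        exact Subtype.ext rfl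
      · intro x
        apply Subtype.ext
        apply Subtype.ext
        rfl
    have hcount : Nat.card {u : Polynomial Fq // u.degree < (N:ℕ) ∧
        ∀ i : Fin M, ((AA Fq (Fintype.card Fq)).eval (polyToK Fq u)).coeff ((i:ℤ)+1) = c i}
          * Fintype.card Fq ^ M = Fintype.card Fq ^ N := by
      rw [hequiv, ← hHcard, hfib, hVcard]
    have hq0 : (0:ℝ) < (Fintype.card Fq : ℝ) := by
      exact_mod_cast Fintype.card_pos
    have hcast : (Nat.card {u : Polynomial Fq // u.degree < (N:ℕ) ∧
        ∀ i : Fin M, ((AA Fq (Fintype.card Fq)).eval (polyToK Fq u)).coeff ((i:ℤ)+1) = c i} : ℝ)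
          * (Fintype.card Fq : ℝ) ^ M = (Fintype.card Fq : ℝ) ^ N := by
      exact_mod_cast hcount
    have hMne : ((Fintype.card Fq : ℝ)) ^ M ≠ 0 := pow_ne_zero _ (ne_of_gt hq0)
    have hNne : ((Fintype.card Fq : ℝ)) ^ N ≠ 0 := pow_ne_zero _ (ne_of_gt hq0)
    rw [eq_div_iff hNne]
    field_simp
    linarith [hcast]
  · -- not Equidistributed
    intro hcon
    have h := hcon 2 (by norm_num) ![0, 1]
    have hzero : (fun N : ℕ =>
        (Nat.card {u : Polynomial Fq // u.degree < (N:ℕ) ∧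
          ∀ i : Fin 2, ((fun u => (AA Fq (Fintype.card Fq)).eval
              (polyToK Fq u ^ (Fintype.card Fq + 1)) -
              polyToK Fq u ^ 2 * HahnSeries.single (1 : ℤ) 1) u).coeff ((i:ℤ)+1)
            = (![0, 1] : Fin 2 → Fq) i} : ℝ) / (Fintype.card Fq : ℝ) ^ N)
        = (fun _ : ℕ => (0:ℝ)) := by
      funext N
      have hemp : IsEmpty {u : Polynomial Fq // u.degree < (N:ℕ) ∧
          ∀ i : Fin 2, ((fun u => (AA Fq (Fintype.card Fq)).eval
              (polyToK Fq u ^ (Fintype.card Fq + 1)) -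
              polyToK Fq u ^ 2 * HahnSeries.single (1 : ℤ) 1) u).coeff ((i:ℤ)+1)
            = (![0, 1] : Fin 2 → Fq) i} := by
        constructor
        rintro ⟨u, hu1, hu2⟩
        have h1 := hu2 1
        simp only [Matrix.cons_val_one, Matrix.head_cons] at h1
        rw [show (((1:Fin 2):ℤ)+1) = (2:ℤ) by norm_num] at h1
        rw [scoeff2 Fq p m hq u] at h1
        exact one_ne_zero h1.symm
      rw [Nat.card_of_isEmpty]
      simp
    rw [hzero] at h
    have h0 : Filter.Tendsto (fun _ : ℕ => (0:ℝ)) Filter.atTop (nhds 0) := tendsto_const_nhds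
    have := tendsto_nhds_unique h h0
    have hq0 : (0:ℝ) < (Fintype.card Fq : ℝ) := by exact_mod_cast Fintype.card_pos
    have : ((Fintype.card Fq : ℝ) ^ 2)⁻¹ ≠ 0 := by positivity
    exact this (by assumption)
end

section
/- For all α, β ∈ K_∞ and every l ∈ {0, 1, …, p−1}, one has ψ_l(α·β) = Σ_{k=0}^{p−1} ψ_k(α)·ψ_{l−k}(β). -/
open Polynomial

/-- Lemma 5.4.  For all `α, β ∈ K_∞` and `l ∈ {0, 1, …, p-1}` one has
`ψ_l(α β) = Σ_{k=0}^{p-1} ψ_k(α) ψ_{l-k}(β)`. -/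
theorem statement17 (p m : ℕ) [Fact p.Prime] (hm : m ≠ 0)
    (Fq : Type) [Field Fq] [Fintype Fq] (hq : Fintype.card Fq = p ^ m)
    (α β : Kinf Fq) (l : ℤ) (hl0 : 0 ≤ l) (hlp : l ≤ (p : ℤ) - 1) :
    psiL p m Fq l (α * β) =
      ∑ k ∈ Finset.range p, psiL p m Fq (k : ℤ) α * psiL p m Fq (l - (k : ℤ)) β := by
  classical
  have hp : p.Prime := Fact.out
  have hp0 : (0:ℤ) < (p:ℤ) := by exact_mod_cast hp.pos
  haveI := ringChar.charP Fq
  obtain ⟨n0, hpr, hcard⟩ := FiniteField.card Fq (ringChar Fq)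
  have hrc : ringChar Fq = p := by
    have h1 : p ∣ (ringChar Fq) ^ (n0 : ℕ) := by
      rw [← hcard, hq]; exact dvd_pow_self p hm
    exact ((Nat.prime_dvd_prime_iff_eq hp hpr).mp (hp.dvd_of_dvd_pow h1)).symm
  haveI : CharP Fq p := hrc ▸ ringChar.charP Fq
  haveI : ExpChar Fq p := ExpChar.prime hp
  set φ : Fq →+* Fq := iterateFrobenius Fq p (m-1) with hφdef
  have hφd : ∀ x : Fq, φ x = x ^ (p ^ (m-1)) := fun x => rfl
  have hφ0 : ∀ x : Fq, φ x = 0 ↔ x = 0 := fun x => by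
    rw [hφd, pow_eq_zero_iff (pow_ne_zero _ hp.ne_zero)]
  have key : ∀ (x : Kinf Fq) (l' n' : ℤ),
      (psiL p m Fq l' x).coeff n' = φ (x.coeff ((p:ℤ)*n' - l')) := fun _ _ _ => rfl
  have hsupp : ∀ (x : Kinf Fq) (l' n' : ℤ),
      n' ∈ (psiL p m Fq l' x).support ↔ ((p:ℤ)*n' - l') ∈ x.support := by
    intro x l' n'
    simp only [HahnSeries.mem_support, key, ne_eq, hφ0]
  have hdvd : ∀ i : ℤ, (p:ℤ) ∣ i + (-i) % (p:ℤ) := by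
    intro i
    refine ⟨-((-i)/(p:ℤ)), ?_⟩
    rw [Int.emod_def]; ring
  ext n
  rw [show (∑ k ∈ Finset.range p, psiL p m Fq (k:ℤ) α * psiL p m Fq (l - (k:ℤ)) β).coeff n
      = ∑ k ∈ Finset.range p, (psiL p m Fq (k:ℤ) α * psiL p m Fq (l-(k:ℤ)) β).coeff n from
      map_sum (HahnSeries.coeff.addMonoidHom n) _ _]
  simp_rw [HahnSeries.coeff_mul]
  rw [key, HahnSeries.coeff_mul, map_sum, Finset.sum_sigma']
  refine Finset.sum_nbij'
    (fun ij => ⟨((-ij.1) % (p:ℤ)).toNat,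
        ((ij.1 + (-ij.1) % (p:ℤ))/(p:ℤ), (ij.2 + l - (-ij.1) % (p:ℤ))/(p:ℤ))⟩)
    (fun x => ((p:ℤ)*x.2.1 - (x.1:ℤ), (p:ℤ)*x.2.2 - (l - (x.1:ℤ))))
    ?_ ?_ ?_ ?_ ?_
  · rintro ⟨i, j⟩ hij
    rw [Finset.mem_addAntidiagonal] at hij
    obtain ⟨hi, hj, hsum⟩ := hij
    set k : ℤ := (-i) % (p:ℤ) with hk
    have hk0 : 0 ≤ k := Int.emod_nonneg _ (ne_of_gt hp0)
    have hkp : k < (p:ℤ) := Int.emod_lt_of_pos _ hp0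
    have hktn : ((k.toNat : ℤ)) = k := Int.toNat_of_nonneg hk0
    have hdi : (p:ℤ) ∣ i + k := hdvd i
    have hdj : (p:ℤ) ∣ j + l - k := by
      have : j + l - k = (p:ℤ)*n - (i + k) := by omega
      rw [this]
      exact dvd_sub (Dvd.intro n rfl) hdi
    have heqi : (p:ℤ) * ((i + k)/(p:ℤ)) = i + k := Int.mul_ediv_cancel' hdi
    have heqj : (p:ℤ) * ((j + l - k)/(p:ℤ)) = j + l - k := Int.mul_ediv_cancel' hdj
    simp only [Finset.mem_sigma, Finset.mem_range, Finset.mem_addAntidiagonal]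
    refine ⟨?_, ?_, ?_, ?_⟩
    · have : (k.toNat : ℤ) < (p:ℤ) := by rw [hktn]; exact hkp
      exact_mod_cast this
    · rw [hsupp]
      have : (p:ℤ) * ((i + k)/(p:ℤ)) - (k.toNat : ℤ) = i := by rw [heqi, hktn]; ring
      rw [this]; exact hi
    · rw [hsupp]
      have : (p:ℤ) * ((j + l - k)/(p:ℤ)) - (l - (k.toNat : ℤ)) = j := by
        rw [heqj, hktn]; ring
      rw [this]; exact hj
    · have hmul : (p:ℤ) * ((i + k)/(p:ℤ) + (j + l - k)/(p:ℤ)) = (p:ℤ) * n := by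
        rw [mul_add, heqi, heqj]; omega
      exact mul_left_cancel₀ (ne_of_gt hp0) hmul
  · rintro ⟨k, i', j'⟩ hx
    simp only [Finset.mem_sigma, Finset.mem_range, Finset.mem_addAntidiagonal] at hx
    obtain ⟨hkp, hi, hj, hsum⟩ := hx
    rw [hsupp] at hi hj
    rw [Finset.mem_addAntidiagonal]
    refine ⟨hi, hj, ?_⟩
    have : ((p:ℤ)*i' - (k:ℤ)) + ((p:ℤ)*j' - (l - (k:ℤ))) = (p:ℤ)*(i'+j') - l := by ring
    rw [this, hsum]
  · rintro ⟨i, j⟩ hij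
    rw [Finset.mem_addAntidiagonal] at hij
    obtain ⟨hi, hj, hsum⟩ := hij
    set k : ℤ := (-i) % (p:ℤ) with hk
    have hk0 : 0 ≤ k := Int.emod_nonneg _ (ne_of_gt hp0)
    have hktn : ((k.toNat : ℤ)) = k := Int.toNat_of_nonneg hk0
    have hdi : (p:ℤ) ∣ i + k := hdvd i
    have hdj : (p:ℤ) ∣ j + l - k := by
      have : j + l - k = (p:ℤ)*n - (i + k) := by omega
      rw [this]
      exact dvd_sub (Dvd.intro n rfl) hdi
    have heqi : (p:ℤ) * ((i + k)/(p:ℤ)) = i + k := Int.mul_ediv_cancel' hdi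
    have heqj : (p:ℤ) * ((j + l - k)/(p:ℤ)) = j + l - k := Int.mul_ediv_cancel' hdj
    refine Prod.ext ?_ ?_
    · show (p:ℤ) * ((i + k)/(p:ℤ)) - (k.toNat : ℤ) = i
      rw [hktn, heqi]; omega
    · show (p:ℤ) * ((j + l - k)/(p:ℤ)) - (l - (k.toNat : ℤ)) = j
      rw [hktn, heqj]; omega
  · rintro ⟨k, i', j'⟩ hx
    simp only [Finset.mem_sigma, Finset.mem_range, Finset.mem_addAntidiagonal] at hx
    obtain ⟨hkp, hi, hj, hsum⟩ := hx
    have hkpz : (k:ℤ) < (p:ℤ) := by exact_mod_cast hkp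
    have hmod : (-((p:ℤ)*i' - (k:ℤ))) % (p:ℤ) = (k:ℤ) := by
      have h1 : -((p:ℤ)*i' - (k:ℤ)) = (k:ℤ) + (p:ℤ) * (-i') := by ring
      rw [h1, Int.add_mul_emod_self_left, Int.emod_eq_of_lt (by positivity) hkpz]
    have h2 : (((p:ℤ)*i' - (k:ℤ)) + (-((p:ℤ)*i' - (k:ℤ))) % (p:ℤ)) / (p:ℤ) = i' := by
      rw [hmod]
      have : ((p:ℤ)*i' - (k:ℤ)) + (k:ℤ) = (p:ℤ) * i' := by ring
      rw [this, Int.mul_ediv_cancel_left _ (ne_of_gt hp0)]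
    have h3 : (((p:ℤ)*j' - (l - (k:ℤ))) + l - (-((p:ℤ)*i' - (k:ℤ))) % (p:ℤ)) / (p:ℤ) = j' := by
      rw [hmod]
      have : ((p:ℤ)*j' - (l - (k:ℤ))) + l - (k:ℤ) = (p:ℤ) * j' := by ring
      rw [this, Int.mul_ediv_cancel_left _ (ne_of_gt hp0)]
    refine Sigma.ext ?_ ?_
    · simp only []
      rw [hmod]
      exact Int.toNat_natCast k
    · simp only []
      rw [hmod]
      refine heq_of_eq ?_
      refine Prod.ext ?_ ?_
      · have h : ((p:ℤ)*i' - (k:ℤ)) + (k:ℤ) = (p:ℤ) * i' := by ring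
        rw [h, Int.mul_ediv_cancel_left _ (ne_of_gt hp0)]
      · have h : ((p:ℤ)*j' - (l - (k:ℤ))) + l - (k:ℤ) = (p:ℤ) * j' := by ring
        rw [h, Int.mul_ediv_cancel_left _ (ne_of_gt hp0)]
  · rintro ⟨i, j⟩ hij
    rw [Finset.mem_addAntidiagonal] at hij
    obtain ⟨hi, hj, hsum⟩ := hij
    set k : ℤ := (-i) % (p:ℤ) with hk
    have hk0 : 0 ≤ k := Int.emod_nonneg _ (ne_of_gt hp0)
    have hktn : ((k.toNat : ℤ)) = k := Int.toNat_of_nonneg hk0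
    have hdi : (p:ℤ) ∣ i + k := hdvd i
    have hdj : (p:ℤ) ∣ j + l - k := by
      have : j + l - k = (p:ℤ)*n - (i + k) := by omega
      rw [this]
      exact dvd_sub (Dvd.intro n rfl) hdi
    have heqi : (p:ℤ) * ((i + k)/(p:ℤ)) = i + k := Int.mul_ediv_cancel' hdi
    have heqj : (p:ℤ) * ((j + l - k)/(p:ℤ)) = j + l - k := Int.mul_ediv_cancel' hdj
    simp only [key]
    rw [map_mul]
    congr 1
    · congr 1; rw [hktn, heqi]; congr 1; omega
    · congr 1; rw [hktn, heqj]; congr 1; omega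
end

section
/- Let γ ∈ K_∞ \ F_q[t], and for h ∈ F_q[t], α ∈ K_∞ and ξ = (ξ_0, …, ξ_{p−1}) ∈ K_∞^p define λ(h; α, ξ) = h·α + Σ_{l=0}^{p−1} ψ_l(h)·ξ_l. Then there exist α, ξ_0, …, ξ_{p−1} ∈ K_∞ such that: (a) λ(1; α, ξ) = γ, and (b) for every h ∈ F_q[t] \ {0, 1}, λ(h; α, ξ) ∉ F_q[t]. -/
open Polynomial

section Aux

lemma polyToK_coeff (Fq : Type) [Field Fq] (h : Polynomial Fq) (n : ℤ) :
    (polyToK Fq h).coeff n = if n ≤ 0 then h.coeff (-n).toNat else 0 := by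
  induction h using Polynomial.induction_on' with
  | add f g hf hg =>
      rw [map_add, HahnSeries.coeff_add, hf, hg]
      split_ifs <;> simp
  | monomial k a =>
      have h1 : polyToK Fq (Polynomial.monomial k a) = HahnSeries.single (-(k : ℤ)) a := by
        show Polynomial.eval₂ _ _ _ = _
        rw [Polynomial.eval₂_monomial, HahnSeries.single_pow]
        have : HahnSeries.C a = HahnSeries.single (0 : ℤ) a := rfl
        rw [this, HahnSeries.single_mul_single]
        simp
      rw [h1, HahnSeries.coeff_single]
      rw [Polynomial.coeff_monomial]
      split_ifs <;> first | rfl | omega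


variable (p m : ℕ) [Fact p.Prime] (Fq : Type) [Field Fq]

/-- decomposition polynomial for l = 0 -/
noncomputable def Hpoly (h : Polynomial Fq) : Polynomial Fq :=
  ∑ j ∈ Finset.range (h.natDegree + 1),
    Polynomial.C ((h.coeff (p * j)) ^ (p ^ (m - 1))) * Polynomial.X ^ j

lemma Hpoly_coeff (h : Polynomial Fq) (k : ℕ) :
    (Hpoly p m Fq h).coeff k = (h.coeff (p * k)) ^ (p ^ (m - 1)) := by
  have hp : p.Prime := Fact.out
  rw [Hpoly, Polynomial.finset_sum_coeff]
  simp only [Polynomial.coeff_C_mul, Polynomial.coeff_X_pow, mul_ite, mul_one, mul_zero]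
  rw [Finset.sum_ite_eq (Finset.range (h.natDegree + 1)) k]
  split_ifs with hk
  · rfl
  · have hk' : h.natDegree < p * k := by
      have h1 : k ≤ p * k := Nat.le_mul_of_pos_left k hp.pos
      simp only [Finset.mem_range] at hk
      omega
    rw [Polynomial.coeff_eq_zero_of_natDegree_lt hk',
      zero_pow (pow_ne_zero _ hp.ne_zero)]

lemma psiL_zero_polyToK (h : Polynomial Fq) :
    psiL p m Fq 0 (polyToK Fq h) = polyToK Fq (Hpoly p m Fq h) := by
  have hp : p.Prime := Fact.out
  ext n
  show ((polyToK Fq h).coeff ((p : ℤ) * n - 0)) ^ (p ^ (m - 1)) = _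
  rw [polyToK_coeff, polyToK_coeff]
  by_cases hn : n ≤ 0
  · obtain ⟨k, rfl⟩ : ∃ k : ℕ, n = -(k : ℤ) := ⟨(-n).toNat, by omega⟩
    have h2 : (p : ℤ) * (-(k : ℤ)) - 0 = -((p * k : ℕ) : ℤ) := by push_cast; ring
    have h3 : ((- -(k : ℤ)).toNat) = k := by omega
    have h4 : ((- -((p * k : ℕ) : ℤ)).toNat) = p * k := by omega
    rw [h2, if_pos (by omega), if_pos hn, h3, h4, Hpoly_coeff]
  · have hpn : ¬ ((p : ℤ) * n - 0 ≤ 0) := by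
      have : 0 < (p : ℤ) * n := by
        have : (0:ℤ) < p := by exact_mod_cast hp.pos
        exact mul_pos this (by omega)
      omega
    rw [if_neg hpn, if_neg hn, zero_pow (pow_ne_zero _ hp.ne_zero)]

lemma Hpoly_one : Hpoly p m Fq 1 = 1 := by
  have hp : p.Prime := Fact.out
  ext k
  rw [Hpoly_coeff]
  rcases Nat.eq_zero_or_pos k with rfl | hk
  · simp
  · have : p * k ≠ 0 := Nat.mul_ne_zero hp.ne_zero (by omega)
    rw [Polynomial.coeff_one, Polynomial.coeff_one, if_neg this, if_neg (by omega),
      zero_pow (pow_ne_zero _ hp.ne_zero)]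

lemma natDegree_eq_zero_of_Hpoly (h : Polynomial Fq) (h0 : h ≠ 0)
    (hh : h = Hpoly p m Fq h) : h.natDegree = 0 := by
  have hp : p.Prime := Fact.out
  by_contra hd
  have hlead : h.coeff h.natDegree ≠ 0 := by
    rw [← Polynomial.leadingCoeff]
    exact Polynomial.leadingCoeff_ne_zero.mpr h0
  have hbig : h.coeff (p * h.natDegree) = 0 := by
    apply Polynomial.coeff_eq_zero_of_natDegree_lt
    have h2 : 2 * h.natDegree ≤ p * h.natDegree := Nat.mul_le_mul_right _ hp.two_le
    omega
  have : h.coeff h.natDegree = (h.coeff (p * h.natDegree)) ^ (p ^ (m - 1)) := by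
    calc h.coeff h.natDegree = (Hpoly p m Fq h).coeff h.natDegree := by rw [← hh]
    _ = (h.coeff (p * h.natDegree)) ^ (p ^ (m - 1)) := Hpoly_coeff p m Fq h _
  rw [hbig, zero_pow (pow_ne_zero _ hp.ne_zero)] at this
  exact hlead this

lemma polyToK_injective : Function.Injective (polyToK Fq) := by
  intro u v huv
  ext k
  have := congrArg (fun f : Kinf Fq => f.coeff (-(k:ℤ))) huv
  simpa [polyToK_coeff] using this

lemma uncountable_Kinf : ¬ Countable (Kinf Fq) := by
  classical
  intro hc
  set f : Set ℕ → Kinf Fq := fun S =>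
    HahnSeries.ofPowerSeries ℤ Fq (PowerSeries.mk (fun n => if n ∈ S then 1 else 0)) with hf
  have hinj : Function.Injective f := by
    intro S T hST
    have h1 := HahnSeries.ofPowerSeries_injective hST
    ext n
    have h2 := congrArg (fun g => PowerSeries.coeff n g) h1
    simp only [PowerSeries.coeff_mk] at h2
    by_cases hS : n ∈ S <;> by_cases hT : n ∈ T <;> simp_all
  obtain ⟨g, hg⟩ := Countable.exists_injective_nat (Kinf Fq)
  exact Function.cantor_injective (g ∘ f) (hg.comp hinj)

lemma exists_alpha [Fintype Fq] (γ : Kinf Fq) :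
    ∃ α : Kinf Fq, ∀ u v g : Polynomial Fq, u ≠ 0 →
      polyToK Fq u * α + polyToK Fq v * γ ≠ polyToK Fq g := by
  set f : Polynomial Fq × Polynomial Fq × Polynomial Fq → Kinf Fq := fun t =>
    (polyToK Fq t.2.2 - polyToK Fq t.2.1 * γ) / polyToK Fq t.1 with hf
  haveI : Countable (AddMonoidAlgebra Fq ℕ) := AddMonoidAlgebra.coeff_injective.countable
  haveI : Countable (Polynomial Fq) := Polynomial.toFinsupp_injective.countable
  obtain ⟨α, hα⟩ : ∃ α : Kinf Fq, α ∉ Set.range f := by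
    by_contra hc
    push_neg at hc
    have hsurj : Function.Surjective f := fun α => hc α
    exact uncountable_Kinf Fq (hsurj.countable)
  refine ⟨α, fun u v g hu heq => hα ⟨(u, v, g), ?_⟩⟩
  have hune : polyToK Fq u ≠ 0 := fun h0 =>
    hu (polyToK_injective Fq (h0.trans (map_zero _).symm))
  show (polyToK Fq g - polyToK Fq v * γ) / polyToK Fq u = α
  rw [div_eq_iff hune]
  linear_combination -heq

end Aux

/-- Lemma 5.5.  For `γ ∈ K_∞ \ F_q[t]` and
`λ(h; α, ξ) = h α + Σ_{l=0}^{p-1} ψ_l(h) ξ_l`, there exist `α, ξ_0, …, ξ_{p-1} ∈ K_∞`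
with `λ(1; α, ξ) = γ` and `λ(h; α, ξ) ∉ F_q[t]` for all `h ∈ F_q[t] \ {0, 1}`. -/
theorem statement19 (p m : ℕ) [Fact p.Prime] (hm : m ≠ 0)
    (Fq : Type) [Field Fq] [Fintype Fq] (hq : Fintype.card Fq = p ^ m)
    (γ : Kinf Fq) (hγ : γ ∉ Set.range (polyToK Fq)) :
    ∃ (α : Kinf Fq) (ξ : Fin p → Kinf Fq),
      (polyToK Fq 1 * α +
          ∑ l : Fin p, psiL p m Fq ((l : ℕ) : ℤ) (polyToK Fq 1) * ξ l = γ) ∧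
      ∀ h : Polynomial Fq, h ≠ 0 → h ≠ 1 →
        polyToK Fq h * α +
            ∑ l : Fin p, psiL p m Fq ((l : ℕ) : ℤ) (polyToK Fq h) * ξ l ∉
          Set.range (polyToK Fq) := by
  classical
  have hp : p.Prime := Fact.out
  obtain ⟨α, hα⟩ := exists_alpha Fq γ
  set ξ : Fin p → Kinf Fq := fun l => if (l : ℕ) = 0 then γ - α else 0 with hξ
  have hsum : ∀ β : Kinf Fq, (∑ l : Fin p, psiL p m Fq ((l : ℕ) : ℤ) β * ξ l)
      = psiL p m Fq 0 β * (γ - α) := by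
    intro β
    have h0 : ∀ l : Fin p, l ≠ ⟨0, hp.pos⟩ → psiL p m Fq ((l : ℕ) : ℤ) β * ξ l = 0 := by
      intro l hl
      have hv : (l : ℕ) ≠ 0 := fun h => hl (Fin.ext h)
      simp [hξ, hv]
      exact fun h => (hv (by simp [h])).elim
    rw [Fintype.sum_eq_single _ h0]
    simp [hξ]
  have hpsi1 : psiL p m Fq 0 (1 : Kinf Fq) = 1 := by
    have h := psiL_zero_polyToK p m Fq 1
    rwa [map_one, Hpoly_one, map_one] at h
  refine ⟨α, ξ, ?_, ?_⟩
  · rw [hsum, map_one, hpsi1]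
    ring
  · intro h h0 h1
    rintro ⟨g, hg⟩
    rw [hsum, psiL_zero_polyToK] at hg
    by_cases hu : h - Hpoly p m Fq h = 0
    · have hh : h = Hpoly p m Fq h := by rwa [sub_eq_zero] at hu
      have hd := natDegree_eq_zero_of_Hpoly p m Fq h h0 hh
      have hc : h = Polynomial.C (h.coeff 0) := Polynomial.eq_C_of_natDegree_eq_zero hd
      set c := h.coeff 0 with hcdef
      have hc0 : c ≠ 0 := fun h' => h0 (by rw [hc, h', map_zero])
      have hγeq : polyToK Fq g = polyToK Fq h * γ := by
        rw [← hh] at hg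
        rw [hg]
        ring
      have hone : polyToK Fq (Polynomial.C c⁻¹) * polyToK Fq h = 1 := by
        rw [hc, ← map_mul, ← Polynomial.C_mul, inv_mul_cancel₀ hc0, Polynomial.C_1, map_one]
      apply hγ
      refine ⟨Polynomial.C c⁻¹ * g, ?_⟩
      calc polyToK Fq (Polynomial.C c⁻¹ * g)
          = polyToK Fq (Polynomial.C c⁻¹) * (polyToK Fq h * γ) := by rw [map_mul, hγeq]
        _ = (polyToK Fq (Polynomial.C c⁻¹) * polyToK Fq h) * γ := by ring
        _ = γ := by rw [hone, one_mul]
    · refine hα (h - Hpoly p m Fq h) (Hpoly p m Fq h) g hu ?_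
      rw [map_sub]
      linear_combination -hg
end
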